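/- arXiv:2011.04089 — 4 statements merged into one kernel-verified Lean document; each statement's English description precedes it below -/
import Mathlib

section
/- (Interpolation inequality.) Let α ∈ (0,1) and f: [τ₀,τ] → ℝᵈ be α-Hölder continuous. Then ‖f‖_∞ ≤ 2√d · max{ (τ−τ₀)^{−1/2} ‖f‖_{L_2([τ₀,τ],ℝᵈ)}, ‖f‖_{L_2([τ₀,τ],ℝᵈ)}^{2α/(2α+1)} ‖f‖_α^{1/(2α+1)} }, where ‖f‖_∞ = sup_{t∈[τ₀,τ]} |f(t)| and ‖f‖_α is the α-Hölder seminorm of f on [τ₀,τ]. -/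
/-!
Put `M = ‖f t‖`. By Hölder continuity, `‖f‖ ≥ M / 2` on the `ℓ`-neighbourhood of `t` as soon as
`Cα ℓ ^ α ≤ M / 2`, and if moreover `ℓ ≤ τ - τ₀` this neighbourhood meets `[τ₀, τ]` in an interval
of length at least `ℓ`, so `(M / 2) ^ 2 ℓ ≤ ‖f‖²_{L²}`. If `ℓ = τ - τ₀` is admissible this gives
the first term of the maximum; otherwise `ℓ = (M / (2 Cα)) ^ (1 / α) < τ - τ₀` gives the second.
-/

open Set MeasureTheory Filter Topology

theorem continuousOn_of_norm_sub_le_mul_rpow {E : Type*} [SeminormedAddCommGroup E]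
    {f : ℝ → E} {s : Set ℝ} {C α : ℝ} (hα : 0 < α)
    (hf : ∀ x ∈ s, ∀ y ∈ s, ‖f y - f x‖ ≤ C * |y - x| ^ α) : ContinuousOn f s := by
  intro x hx
  rw [ContinuousWithinAt, tendsto_iff_norm_sub_tendsto_zero]
  have hlim : Tendsto (fun y => C * |y - x| ^ α) (𝓝[s] x) (𝓝 (C * |x - x| ^ α)) :=
    ((continuous_const.mul ((continuous_id.sub continuous_const).abs.rpow_const
      fun _ => Or.inr hα.le))).continuousWithinAt
  rw [sub_self, abs_zero, Real.zero_rpow hα.ne', mul_zero] at hlim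
  exact squeeze_zero' (Eventually.of_forall fun _ => norm_nonneg _)
    (eventually_nhdsWithin_of_forall fun y hy => hf x hx y hy) hlim

theorem exists_Icc_add_subset {τ₀ τ t ℓ : ℝ} (ht : t ∈ Icc τ₀ τ) (hℓ : ℓ ≤ τ - τ₀) :
    ∃ a, Icc a (a + ℓ) ⊆ Icc τ₀ τ ∩ Icc (t - ℓ) (t + ℓ) :=
  ⟨min (max τ₀ (t - ℓ)) (τ - ℓ), fun _ _ => by grind⟩

theorem mul_le_setIntegral_of_le_on_Icc {g : ℝ → ℝ} {s : Set ℝ} {a ℓ c : ℝ} (hℓ : 0 ≤ ℓ)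
    (hs : MeasurableSet s) (hsub : Icc a (a + ℓ) ⊆ s) (hg : IntegrableOn g s)
    (hg0 : ∀ x ∈ s, 0 ≤ g x) (hc : ∀ x ∈ Icc a (a + ℓ), c ≤ g x) :
    c * ℓ ≤ ∫ x in s, g x := calc
  c * ℓ = c * volume.real (Icc a (a + ℓ)) := by
    rw [Real.volume_real_Icc_of_le (by linarith), add_sub_cancel_left]
  _ ≤ ∫ x in Icc a (a + ℓ), g x :=
    setIntegral_ge_of_const_le_real measurableSet_Icc measure_Icc_lt_top.ne hc (hg.mono_set hsub)
  _ ≤ ∫ x in s, g x :=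
    setIntegral_mono_set hg ((ae_restrict_iff' hs).2 (Eventually.of_forall hg0))
      hsub.eventuallyLE

theorem half_norm_le_norm_of_holder {E : Type*} [SeminormedAddCommGroup E] {f : ℝ → E}
    {s : Set ℝ} {C α ℓ t u : ℝ} (hα : 0 ≤ α) (hC : 0 ≤ C)
    (hf : ∀ x ∈ s, ∀ y ∈ s, ‖f y - f x‖ ≤ C * |y - x| ^ α) (ht : t ∈ s) (hu : u ∈ s)
    (htu : |t - u| ≤ ℓ) (hℓ : C * ℓ ^ α ≤ ‖f t‖ / 2) : ‖f t‖ / 2 ≤ ‖f u‖ := by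
  have hdiff : ‖f t - f u‖ ≤ ‖f t‖ / 2 := calc
    ‖f t - f u‖ ≤ C * |t - u| ^ α := hf u hu t ht
    _ ≤ C * ℓ ^ α := by gcongr
    _ ≤ ‖f t‖ / 2 := hℓ
  linarith [norm_sub_norm_le (f t) (f u)]

theorem le_rpow_neg_half_mul_sqrt {x T I : ℝ} (hx : 0 ≤ x) (hT : 0 < T) (h : x ^ 2 * T ≤ I) :
    x ≤ T ^ (-(1 / 2) : ℝ) * √I := calc
  x = T ^ (-(1 / 2) : ℝ) * √(x ^ 2 * T) := by
    rw [Real.rpow_neg hT.le, ← Real.sqrt_eq_rpow, Real.sqrt_mul (sq_nonneg x), Real.sqrt_sq hx]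
    field_simp
  _ ≤ T ^ (-(1 / 2) : ℝ) * √I := by gcongr

theorem le_rpow_mul_rpow_of_sq_mul_le {α x C δ L : ℝ} (hα : 0 < α) (hx : 0 ≤ x) (hC : 0 ≤ C)
    (hδ : 0 ≤ δ) (hL : 0 ≤ L) (hCδ : C * δ ^ α = x) (h : x ^ 2 * δ ≤ L ^ 2) :
    x ≤ L ^ (2 * α / (2 * α + 1)) * C ^ (1 / (2 * α + 1)) := by
  have hβ : 0 < 2 * α + 1 := by linarith
  have hpow : x ^ (2 * α + 1) ≤ L ^ (2 * α) * C := calc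
    x ^ (2 * α + 1) = C * (x ^ 2 * δ) ^ α := by
      rw [Real.rpow_add_one' hx hβ.ne', Real.mul_rpow (by positivity) hδ,
        ← Real.rpow_natCast_mul hx]
      nth_rw 2 [← hCδ]
      push_cast
      ring
    _ ≤ C * (L ^ 2) ^ α := by gcongr
    _ = L ^ (2 * α) * C := by rw [← Real.rpow_natCast_mul hL]; push_cast; ring
  rw [← Real.rpow_le_rpow_iff hx (by positivity) hβ, Real.mul_rpow (by positivity) (by positivity),
    ← Real.rpow_mul hL, ← Real.rpow_mul hC, div_mul_cancel₀ _ hβ.ne', one_div_mul_cancel hβ.ne',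
    Real.rpow_one]
  exact hpow

theorem sq_half_norm_mul_le_integral_of_holder {E : Type*} [SeminormedAddCommGroup E]
    {f : ℝ → E} {C α τ₀ τ t ℓ : ℝ} (hα : 0 ≤ α) (hC : 0 ≤ C)
    (hf : ∀ s ∈ Icc τ₀ τ, ∀ t ∈ Icc τ₀ τ, ‖f t - f s‖ ≤ C * |t - s| ^ α)
    (hint : IntegrableOn (fun s => ‖f s‖ ^ 2) (Icc τ₀ τ)) (ht : t ∈ Icc τ₀ τ)
    (hℓ0 : 0 ≤ ℓ) (hℓ : ℓ ≤ τ - τ₀) (hCℓ : C * ℓ ^ α ≤ ‖f t‖ / 2) :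
    (‖f t‖ / 2) ^ 2 * ℓ ≤ ∫ s in Icc τ₀ τ, ‖f s‖ ^ 2 := by
  obtain ⟨a, ha⟩ := exists_Icc_add_subset ht hℓ
  refine mul_le_setIntegral_of_le_on_Icc hℓ0 measurableSet_Icc (fun s hs => (ha hs).1) hint
    (fun _ _ => by positivity) fun s hs => ?_
  obtain ⟨hs, hsl, hsr⟩ := ha hs
  have hhalf := half_norm_le_norm_of_holder hα hC hf ht hs (abs_le.2 ⟨by linarith, by linarith⟩) hCℓ
  gcongr

theorem norm_le_two_mul_max_of_holder {E : Type*} [SeminormedAddCommGroup E]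
    {f : ℝ → E} {C α τ₀ τ t : ℝ} (hα : 0 < α) (hττ : τ₀ < τ) (hC : 0 ≤ C)
    (hf : ∀ s ∈ Icc τ₀ τ, ∀ t ∈ Icc τ₀ τ, ‖f t - f s‖ ≤ C * |t - s| ^ α) (ht : t ∈ Icc τ₀ τ) :
    ‖f t‖ ≤ 2 * max ((τ - τ₀) ^ (-(1 / 2) : ℝ) * √(∫ s in Icc τ₀ τ, ‖f s‖ ^ 2))
      (√(∫ s in Icc τ₀ τ, ‖f s‖ ^ 2) ^ (2 * α / (2 * α + 1)) * C ^ (1 / (2 * α + 1))) := by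
  have hint : IntegrableOn (fun s => ‖f s‖ ^ 2) (Icc τ₀ τ) :=
    ((continuousOn_of_norm_sub_le_mul_rpow hα hf).norm.pow 2).integrableOn_Icc
  rw [← div_le_iff₀' two_pos, le_max_iff]
  by_cases hlong : C * (τ - τ₀) ^ α ≤ ‖f t‖ / 2
  · exact .inl <| le_rpow_neg_half_mul_sqrt (by positivity) (sub_pos.2 hττ)
      (sq_half_norm_mul_le_integral_of_holder hα.le hC hf hint ht (sub_pos.2 hττ).le le_rfl hlong)
  · have hCpos : 0 < C := hC.lt_of_ne <| by rintro rfl; exact hlong (by rw [zero_mul]; positivity)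
    set δ := (‖f t‖ / 2 / C) ^ α⁻¹
    have hCδ : C * δ ^ α = ‖f t‖ / 2 := by
      rw [Real.rpow_inv_rpow (by positivity) hα.ne']
      field_simp
    have hδ : δ ≤ τ - τ₀ := by
      by_contra! h
      exact hlong (hCδ ▸ by gcongr)
    refine .inr <| le_rpow_mul_rpow_of_sq_mul_le hα (by positivity) hC (by positivity)
      (Real.sqrt_nonneg _) hCδ ?_
    rw [Real.sq_sqrt (setIntegral_nonneg measurableSet_Icc fun _ _ => by positivity)]
    exact sq_half_norm_mul_le_integral_of_holder hα.le hC hf hint ht (by positivity) hδ hCδ.le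

theorem stmt9_general (d : ℕ) (α : ℝ) (hα : 0 < α)
    (τ₀ τ : ℝ) (hττ : τ₀ < τ)
    (f : ℝ → EuclideanSpace ℝ (Fin d)) (Cα : ℝ) (hCα : 0 ≤ Cα)
    (hf : ∀ s ∈ Icc τ₀ τ, ∀ t ∈ Icc τ₀ τ, ‖f t - f s‖ ≤ Cα * |t - s| ^ α) :
    ∀ t ∈ Icc τ₀ τ,
      ‖f t‖ ≤ 2 * Real.sqrt d *
        max ((τ - τ₀) ^ (-(1 / 2) : ℝ) *
              Real.sqrt (∫ s in Icc τ₀ τ, ‖f s‖ ^ 2))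
            ((Real.sqrt (∫ s in Icc τ₀ τ, ‖f s‖ ^ 2)) ^ (2 * α / (2 * α + 1)) *
              Cα ^ (1 / (2 * α + 1))) := by
  intro t ht
  rcases Nat.eq_zero_or_pos d with rfl | hd
  · simp [Subsingleton.elim (f t) 0]
  have hmax := norm_le_two_mul_max_of_holder hα hττ hCα hf ht
  have hsqrt : 1 ≤ √(d : ℝ) := Real.one_le_sqrt.2 (by exact_mod_cast hd)
  rw [mul_right_comm]
  exact hmax.trans (le_mul_of_one_le_right (hmax.trans' (norm_nonneg _)) hsqrt)

/-- (Interpolation inequality.)  Let `α ∈ (0,1)` and `f : [τ₀,τ] → ℝᵈ` be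
`α`-Hölder continuous with Hölder constant `Cα`.  Then
`‖f‖_∞ ≤ 2√d · max{ (τ−τ₀)^{−1/2} ‖f‖_{L²}, ‖f‖_{L²}^{2α/(2α+1)} Cα^{1/(2α+1)} }`,
where `‖f‖_{L²} = (∫_{τ₀}^τ |f|²)^{1/2}`. -/
theorem stmt9 (d : ℕ) (α : ℝ) (hα : 0 < α) (hα1 : α < 1)
    (τ₀ τ : ℝ) (hττ : τ₀ < τ)
    (f : ℝ → EuclideanSpace ℝ (Fin d)) (Cα : ℝ) (hCα : 0 ≤ Cα)
    (hf : ∀ s ∈ Icc τ₀ τ, ∀ t ∈ Icc τ₀ τ, ‖f t - f s‖ ≤ Cα * |t - s| ^ α) :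
    ∀ t ∈ Icc τ₀ τ,
      ‖f t‖ ≤ 2 * Real.sqrt d *
        max ((τ - τ₀) ^ (-(1 / 2) : ℝ) *
              Real.sqrt (∫ s in Icc τ₀ τ, ‖f s‖ ^ 2))
            ((Real.sqrt (∫ s in Icc τ₀ τ, ‖f s‖ ^ 2)) ^ (2 * α / (2 * α + 1)) *
              Cα ^ (1 / (2 * α + 1))) :=
  stmt9_general d α hα τ₀ τ hττ f Cα hCα hf
end

section
/- Let E₂, E₃ be Banach spaces and F: E₂ → E₃ a C³ map whose second derivative D²F is C¹ with bounded D²F and D³F, and whose first derivative DF is bounded on the image of U. Let X̄ ∈ C^α with rough path lift 𝐗 = (X̄, 𝕏) ∈ 𝒞^α([0,T], E₁), α ∈ (1/3,1/2), and let (U,U') ∈ 𝒟^{2α}_{X̄}([0,T], E₂) satisfy U_t = Γ_t + ∫_0^t U'_s d𝐗_s with Γ ∈ C^{2α}([0,T], E₂) and (U',U'') ∈ 𝒟^{2α}_{X̄}([0,T], L(E₁,E₂)). Then F(U_t) = F(U_0) + ∫_0^t DF(U_s) U'_s d𝐗_s + ∫_0^t DF(U_s) dΓ_s + (1/2)∫_0^t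 D²F(U_s)(U'_s, U'_s) d[𝐗]_s, where [𝐗]_t = δX̄_{0,t} ⊗ δX̄_{0,t} − 2 Sym(𝕏_{0,t}) and the last two integrals are Young integrals. -/
/-!
The two Young integrals `∫ DF(U) dΓ` and `∫ D²F(U)(U', U') d[𝐗]` come from the sewing lemma:
their germs `DF(U_s) δΓ_{s,t}` and `D²F(U_s)(U'_s, U'_s) δ[𝐗]_{s,t}` have defects of order
`(t - s)^{α + 2α}`, and `3α > 1`. The rough integral `Z₁` is then defined as `F(U_t) - F(U_s)`
minus the two Young integrals, so the Itô formula holds by construction, and the content of the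
theorem is that `Z₁` has the local expansion of `∫ DF(U)U' d𝐗`. That follows from the second-order
Taylor expansion of `F` at `U_s`, the expansion `δU ≈ δΓ + U'δX + 𝕏 U''`, and Chen's relation,
which turns `½ D²F(U'δX, U'δX) - ½ δ[𝐗] : D²F(U', U')` into `𝕏 : D²F(U', U')`.

The sewing lemma itself is proved with the dyadic partitions of `[0, T]`, clamped to `[s, t]`.
Refining the partition of level `n` changes the Riemann sum by at most
`∑ C |I|^θ ≤ C (T / 2^n)^(θ-1) (t - s)`, which is summable, and the same bound controls the defect
of additivity in the limit. At the level where the mesh is comparable to `t - s`, at most two cells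
are nondegenerate, which gives the bound `K (t - s)^θ`.
-/

open Set Filter Topology

theorem sum_range_two_mul {M : Type*} [AddCommMonoid M] (n : ℕ) (f : ℕ → M) :
    ∑ k ∈ Finset.range (2 * n), f k = ∑ k ∈ Finset.range n, (f (2 * k) + f (2 * k + 1)) := by
  induction n with
  | zero => simp
  | succ n ih =>
    rw [Nat.mul_succ, Finset.sum_range_succ, Finset.sum_range_succ, Finset.sum_range_succ, ih,
      add_assoc]

theorem sum_rpow_sub_le {p : ℕ → ℝ} {m : ℕ} {h θ : ℝ} (hp : Monotone p) (hθ : 1 ≤ θ)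
    (hh : ∀ k < m, p (k + 1) - p k ≤ h) :
    ∑ k ∈ Finset.range m, (p (k + 1) - p k) ^ θ ≤ h ^ (θ - 1) * (p m - p 0) := by
  rw [← Finset.sum_range_sub p m, Finset.mul_sum]
  refine Finset.sum_le_sum fun k hk => ?_
  have hd : 0 ≤ p (k + 1) - p k := sub_nonneg.2 (hp k.le_succ)
  calc (p (k + 1) - p k) ^ θ = (p (k + 1) - p k) ^ (θ - 1) * (p (k + 1) - p k) := by
        rw [← Real.rpow_add_one' hd (by linarith), sub_add_cancel]
    _ ≤ h ^ (θ - 1) * (p (k + 1) - p k) :=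
        mul_le_mul_of_nonneg_right
          (Real.rpow_le_rpow hd (hh k (Finset.mem_range.1 hk)) (by linarith)) hd

theorem card_le_two_of_forall_le_add_one {S : Finset ℕ} (h : ∀ a ∈ S, ∀ b ∈ S, b ≤ a + 1) :
    S.card ≤ 2 := by
  rcases S.eq_empty_or_nonempty with rfl | hne
  · simp
  refine (Finset.card_le_card fun b hb => ?_).trans
    (Finset.card_le_two (a := S.min' hne) (b := S.min' hne + 1))
  have h₁ := S.min'_le b hb
  have h₂ := h _ (S.min'_mem hne) b hb
  simp only [Finset.mem_insert, Finset.mem_singleton]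
  omega

theorem exists_le_div_two_pow_le {x T : ℝ} (hx : 0 < x) (hxT : x ≤ T) :
    ∃ N : ℕ, x ≤ T / 2 ^ N ∧ T / 2 ^ N ≤ 2 * x := by
  obtain ⟨N, hN₁, hN₂⟩ := exists_nat_pow_near (x := T / x) (y := 2) ((one_le_div hx).2 hxT)
    one_lt_two
  rw [le_div_iff₀ hx] at hN₁
  rw [div_lt_iff₀ hx, pow_succ] at hN₂
  exact ⟨N, by rw [le_div_iff₀ (by positivity)]; linarith,
    by rw [div_le_iff₀ (by positivity)]; linarith⟩

theorem div_two_pow_rpow {T : ℝ} (hT : 0 ≤ T) (n : ℕ) (y : ℝ) :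
    (T / 2 ^ n) ^ y = T ^ y * ((2⁻¹ : ℝ) ^ y) ^ n := by
  rw [div_eq_mul_inv, ← inv_pow, Real.mul_rpow hT (by positivity),
    Real.rpow_pow_comm (by norm_num)]

section Sewing

variable {E : Type*} [NormedAddCommGroup E]

def HasLocalExpansion (g : ℝ → E) (A : ℝ → ℝ → E) (T θ : ℝ) : Prop :=
  ∃ K, ∀ s t, 0 ≤ s → s ≤ t → t ≤ T → ‖g t - g s - A s t‖ ≤ K * (t - s) ^ θ

def IsAlmostAdditive (A : ℝ → ℝ → E) (T θ C : ℝ) : Prop :=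
  ∀ s u t, 0 ≤ s → s ≤ u → u ≤ t → t ≤ T → ‖A s t - A s u - A u t‖ ≤ C * (t - s) ^ θ

noncomputable def dyadicPoint (T : ℝ) (n : ℕ) (s t : ℝ) (k : ℕ) : ℝ :=
  max s (min t (k * T / 2 ^ n))

noncomputable def dyadicSum (A : ℝ → ℝ → E) (T : ℝ) (n : ℕ) (s t : ℝ) : E :=
  ∑ k ∈ Finset.range (2 ^ n), A (dyadicPoint T n s t k) (dyadicPoint T n s t (k + 1))

noncomputable def sewingMap (A : ℝ → ℝ → E) (T s t : ℝ) : E :=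
  limUnder atTop fun n => dyadicSum A T n s t

section DyadicPoint

variable {T s t : ℝ} {n : ℕ}

theorem dyadicPoint_zero (hs : 0 ≤ s) : dyadicPoint T n s t 0 = s := by
  simp [dyadicPoint, hs]

theorem dyadicPoint_two_pow (hst : s ≤ t) (htT : t ≤ T) : dyadicPoint T n s t (2 ^ n) = t := by
  simp [dyadicPoint, htT, hst]

theorem dyadicPoint_two_mul (k : ℕ) :
    dyadicPoint T (n + 1) s t (2 * k) = dyadicPoint T n s t k := by
  simp only [dyadicPoint]
  congr 2
  push_cast
  field_simp
  ring

theorem le_dyadicPoint (k : ℕ) : s ≤ dyadicPoint T n s t k := le_max_left _ _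

theorem dyadicPoint_le (hst : s ≤ t) (k : ℕ) : dyadicPoint T n s t k ≤ t :=
  max_le hst (min_le_left _ _)

theorem dyadicPoint_mono (hT : 0 ≤ T) : Monotone (dyadicPoint T n s t) := fun k l hkl => by
  unfold dyadicPoint
  gcongr

theorem dyadicPoint_succ_sub_le (hT : 0 ≤ T) (k : ℕ) :
    dyadicPoint T n s t (k + 1) - dyadicPoint T n s t k ≤ T / 2 ^ n := by
  have : 0 ≤ T / 2 ^ n := by positivity
  have h : ((k + 1 : ℕ) : ℝ) * T / 2 ^ n = k * T / 2 ^ n + T / 2 ^ n := by push_cast; ring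
  simp only [dyadicPoint, h, max_def, min_def]
  split_ifs <;> linarith

theorem min_dyadicPoint {r : ℝ} (hrs : r ≤ s) (hst : s ≤ t) (k : ℕ) :
    min s (dyadicPoint T n r t k) = dyadicPoint T n r s k := by
  simp only [dyadicPoint, max_def, min_def]
  split_ifs <;> linarith

theorem max_dyadicPoint {r : ℝ} (hrs : r ≤ s) (k : ℕ) :
    max s (dyadicPoint T n r t k) = dyadicPoint T n s t k := by
  simp only [dyadicPoint, max_def, min_def]
  split_ifs <;> linarith

end DyadicPoint

/-- Cutting the cell `[a, c]` at `s`: both sides are `A a c - A a s - A s c` if `a < s < c`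
and vanish otherwise. -/
theorem sub_apply_min_sub_apply_max {A : ℝ → ℝ → E} {a c s : ℝ} (hac : a ≤ c) (ha : A a a = 0)
    (hs : A s s = 0) (hc : A c c = 0) :
    A a c - A (min s a) (min s c) - A (max s a) (max s c) =
      A a c - A a (max a (min s c)) - A (max a (min s c)) c := by
  rcases le_total s a with hsa | has
  · simp [hsa, hsa.trans hac, hs, ha]
  rcases le_total s c with hsc | hcs
  · simp [has, hsc]
  · simp [has, hcs, hac, hc, hs]

namespace IsAlmostAdditive

variable {A : ℝ → ℝ → E} {T θ C : ℝ}

theorem const_nonneg (hA : IsAlmostAdditive A T θ C) (hT : 0 < T) : 0 ≤ C := by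
  have h := (norm_nonneg _).trans (hA 0 0 T le_rfl le_rfl hT.le le_rfl)
  rw [sub_zero] at h
  exact nonneg_of_mul_nonneg_left h (Real.rpow_pos_of_pos hT θ)

theorem apply_self (hA : IsAlmostAdditive A T θ C) (hθ : 0 < θ) {x : ℝ} (hx : 0 ≤ x)
    (hxT : x ≤ T) : A x x = 0 := by
  simpa [Real.zero_rpow hθ.ne'] using hA x x x hx le_rfl le_rfl hxT

theorem norm_sum_sub_le (hA : IsAlmostAdditive A T θ C) (hC : 0 ≤ C) (hθ : 0 < θ)
    {p : ℕ → ℝ} (hp : Monotone p) (h0 : 0 ≤ p 0) {m : ℕ} (hm : p m ≤ T) :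
    ‖∑ k ∈ Finset.range m, A (p k) (p (k + 1)) - A (p 0) (p m)‖ ≤
      ((Finset.range m).filter fun k => p k < p (k + 1)).card * (C * (p m - p 0) ^ θ) := by
  induction m with
  | zero => simp [hA.apply_self hθ h0 (hp (Nat.zero_le _) |>.trans hm)]
  | succ m ih =>
    have hmT : p m ≤ T := (hp m.le_succ).trans hm
    have hpow : C * (p m - p 0) ^ θ ≤ C * (p (m + 1) - p 0) ^ θ := by
      gcongr
      · exact sub_nonneg.2 (hp (Nat.zero_le _))
      · exact hp m.le_succ
    have hsplit : ∑ k ∈ Finset.range (m + 1), A (p k) (p (k + 1)) - A (p 0) (p (m + 1)) =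
        (∑ k ∈ Finset.range m, A (p k) (p (k + 1)) - A (p 0) (p m)) -
          (A (p 0) (p (m + 1)) - A (p 0) (p m) - A (p m) (p (m + 1))) := by
      rw [Finset.sum_range_succ]
      abel
    rw [hsplit, Finset.range_add_one, Finset.filter_insert]
    rcases (hp m.le_succ).lt_or_eq with hlt | heq
    · rw [if_pos hlt, Finset.card_insert_of_notMem (by simp), Nat.cast_succ, add_mul]
      refine (norm_sub_le _ _).trans (add_le_add ((ih hmT).trans ?_) ?_)
      · exact mul_le_mul_of_nonneg_left hpow (Nat.cast_nonneg _)
      · simpa using hA _ _ _ h0 (hp (Nat.zero_le _)) (hp m.le_succ) hm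
    · rw [if_neg heq.not_lt, ← heq, sub_self, hA.apply_self hθ (h0.trans (hp (Nat.zero_le _))) hmT,
        sub_zero, sub_zero]
      exact ih hmT

theorem norm_sum_sub_sub_le (hA : IsAlmostAdditive A T θ C) (hC : 0 ≤ C) (hθ : 1 ≤ θ)
    {p b : ℕ → ℝ} {m : ℕ} {h : ℝ} (hp : Monotone p) (h0 : 0 ≤ p 0) (hm : p m ≤ T)
    (hb : ∀ k < m, p k ≤ b k ∧ b k ≤ p (k + 1)) (hh : ∀ k < m, p (k + 1) - p k ≤ h) :
    ‖∑ k ∈ Finset.range m, (A (p k) (p (k + 1)) - A (p k) (b k) - A (b k) (p (k + 1)))‖ ≤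
      C * h ^ (θ - 1) * (p m - p 0) := by
  calc _ ≤ ∑ k ∈ Finset.range m, ‖A (p k) (p (k + 1)) - A (p k) (b k) - A (b k) (p (k + 1))‖ :=
        norm_sum_le _ _
    _ ≤ ∑ k ∈ Finset.range m, C * (p (k + 1) - p k) ^ θ := by
        refine Finset.sum_le_sum fun k hk => ?_
        have hk := Finset.mem_range.1 hk
        exact hA _ _ _ (h0.trans (hp (Nat.zero_le _))) (hb k hk).1 (hb k hk).2
          ((hp (by omega : k + 1 ≤ m)).trans hm)
    _ = C * ∑ k ∈ Finset.range m, (p (k + 1) - p k) ^ θ := (Finset.mul_sum _ _ _).symm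
    _ ≤ C * (h ^ (θ - 1) * (p m - p 0)) :=
        mul_le_mul_of_nonneg_left (sum_rpow_sub_le hp hθ hh) hC
    _ = C * h ^ (θ - 1) * (p m - p 0) := by ring

theorem norm_dyadicSum_succ_sub_le (hA : IsAlmostAdditive A T θ C) (hT : 0 < T) (hθ : 1 ≤ θ)
    {s t : ℝ} (hs : 0 ≤ s) (hst : s ≤ t) (htT : t ≤ T) (n : ℕ) :
    ‖dyadicSum A T (n + 1) s t - dyadicSum A T n s t‖ ≤ C * (T / 2 ^ n) ^ (θ - 1) * (t - s) := by
  have hp := dyadicPoint_mono (n := n) (s := s) (t := t) hT.le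
  have hq := dyadicPoint_mono (n := n + 1) (s := s) (t := t) hT.le
  have hrefine : dyadicSum A T (n + 1) s t - dyadicSum A T n s t =
      -∑ k ∈ Finset.range (2 ^ n),
        (A (dyadicPoint T n s t k) (dyadicPoint T n s t (k + 1))
          - A (dyadicPoint T n s t k) (dyadicPoint T (n + 1) s t (2 * k + 1))
          - A (dyadicPoint T (n + 1) s t (2 * k + 1)) (dyadicPoint T n s t (k + 1))) := by
    rw [dyadicSum, dyadicSum, pow_succ', sum_range_two_mul, ← Finset.sum_neg_distrib,
      ← Finset.sum_sub_distrib]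
    refine Finset.sum_congr rfl fun k _ => ?_
    rw [dyadicPoint_two_mul, show 2 * k + 1 + 1 = 2 * (k + 1) by ring, dyadicPoint_two_mul]
    abel
  rw [hrefine, norm_neg]
  have h := hA.norm_sum_sub_sub_le (hA.const_nonneg hT) hθ hp
    ((dyadicPoint_zero hs).symm ▸ hs) ((dyadicPoint_two_pow hst htT).symm ▸ htT)
    (b := fun k => dyadicPoint T (n + 1) s t (2 * k + 1))
    (fun k _ => ⟨by rw [← dyadicPoint_two_mul]; exact hq (by omega),
      by rw [← dyadicPoint_two_mul (k + 1)]; exact hq (by omega)⟩)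
    (fun k _ => dyadicPoint_succ_sub_le hT.le k)
  rwa [dyadicPoint_two_pow hst htT, dyadicPoint_zero hs] at h

theorem norm_dyadicSum_sub_sub_le (hA : IsAlmostAdditive A T θ C) (hT : 0 < T) (hθ : 1 ≤ θ)
    {r s t : ℝ} (hr : 0 ≤ r) (hrs : r ≤ s) (hst : s ≤ t) (htT : t ≤ T) (n : ℕ) :
    ‖dyadicSum A T n r t - dyadicSum A T n r s - dyadicSum A T n s t‖ ≤
      C * (T / 2 ^ n) ^ (θ - 1) * (t - r) := by
  set p := dyadicPoint T n r t
  have hp := dyadicPoint_mono (n := n) (s := r) (t := t) hT.le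
  have hpT : ∀ k, A (p k) (p k) = 0 := fun k =>
    hA.apply_self (by linarith) (hr.trans (le_dyadicPoint k))
      ((dyadicPoint_le (hrs.trans hst) k).trans htT)
  have hsplit : dyadicSum A T n r t - dyadicSum A T n r s - dyadicSum A T n s t =
      ∑ k ∈ Finset.range (2 ^ n), (A (p k) (p (k + 1)) - A (p k) (max (p k) (min s (p (k + 1))))
        - A (max (p k) (min s (p (k + 1)))) (p (k + 1))) := by
    simp only [dyadicSum, ← Finset.sum_sub_distrib]
    refine Finset.sum_congr rfl fun k _ => ?_
    rw [← min_dyadicPoint hrs hst, ← min_dyadicPoint hrs hst, ← max_dyadicPoint hrs,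
      ← max_dyadicPoint hrs]
    exact sub_apply_min_sub_apply_max (hp k.le_succ) (hpT k)
      (hA.apply_self (by linarith) (hr.trans hrs) (hst.trans htT)) (hpT (k + 1))
  rw [hsplit]
  have h := hA.norm_sum_sub_sub_le (hA.const_nonneg hT) hθ hp
    ((dyadicPoint_zero hr).symm ▸ hr) ((dyadicPoint_two_pow (hrs.trans hst) htT).symm ▸ htT)
    (b := fun k => max (p k) (min s (p (k + 1))))
    (fun k _ => ⟨le_max_left _ _, max_le (hp k.le_succ) (min_le_right _ _)⟩)
    (fun k _ => dyadicPoint_succ_sub_le hT.le k)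
  rwa [dyadicPoint_two_pow (hrs.trans hst) htT, dyadicPoint_zero hr] at h

theorem norm_dyadicSum_sub_le (hA : IsAlmostAdditive A T θ C) (hT : 0 < T) (hθ : 0 < θ)
    {s t : ℝ} {n : ℕ} (hs : 0 ≤ s) (hst : s ≤ t) (htT : t ≤ T) (hmesh : t - s ≤ T / 2 ^ n) :
    ‖dyadicSum A T n s t - A s t‖ ≤ 2 * (C * (t - s) ^ θ) := by
  set p := dyadicPoint T n s t
  have hgrid : ∀ k : ℕ, ((k + 1 : ℕ) : ℝ) * T / 2 ^ n = k * T / 2 ^ n + T / 2 ^ n := fun k => by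
    push_cast; ring
  have hactive : ∀ k, p k < p (k + 1) → k * T / 2 ^ n < t ∧ s < ((k + 1 : ℕ) : ℝ) * T / 2 ^ n := by
    intro k hk
    simp only [p, dyadicPoint, max_def, min_def] at hk
    split_ifs at hk <;> constructor <;> linarith [hgrid k]
  -- an interval of length at most `T / 2 ^ n` meets at most two cells of the grid
  have hcard : ((Finset.range (2 ^ n)).filter fun k => p k < p (k + 1)).card ≤ 2 := by
    refine card_le_two_of_forall_le_add_one fun a ha b hb => ?_
    by_contra! hab
    have h₁ := (hactive a (Finset.mem_filter.1 ha).2).2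
    have h₂ := (hactive b (Finset.mem_filter.1 hb).2).1
    have h₃ : ((a + 1 : ℕ) : ℝ) * T / 2 ^ n + T / 2 ^ n ≤ b * T / 2 ^ n := by
      rw [← hgrid]
      gcongr
      exact_mod_cast hab
    linarith
  have h := hA.norm_sum_sub_le (hA.const_nonneg hT) hθ (dyadicPoint_mono hT.le)
    ((dyadicPoint_zero hs).symm ▸ hs) (m := 2 ^ n) ((dyadicPoint_two_pow hst htT).symm ▸ htT)
  rw [dyadicPoint_two_pow hst htT, dyadicPoint_zero hs] at h
  refine h.trans (mul_le_mul_of_nonneg_right (by exact_mod_cast hcard) ?_)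
  exact mul_nonneg (hA.const_nonneg hT) (Real.rpow_nonneg (sub_nonneg.2 hst) _)

theorem dist_dyadicSum_succ_le (hA : IsAlmostAdditive A T θ C) (hT : 0 < T) (hθ : 1 ≤ θ)
    {s t : ℝ} (hs : 0 ≤ s) (hst : s ≤ t) (htT : t ≤ T) (n : ℕ) :
    dist (dyadicSum A T n s t) (dyadicSum A T (n + 1) s t) ≤
      C * T ^ (θ - 1) * (t - s) * ((2⁻¹ : ℝ) ^ (θ - 1)) ^ n := by
  rw [dist_comm, dist_eq_norm]
  refine (hA.norm_dyadicSum_succ_sub_le hT hθ hs hst htT n).trans_eq ?_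
  rw [div_two_pow_rpow hT.le]
  ring

theorem tendsto_dyadicSum [CompleteSpace E] (hA : IsAlmostAdditive A T θ C) (hT : 0 < T)
    (hθ : 1 < θ) {s t : ℝ} (hs : 0 ≤ s) (hst : s ≤ t) (htT : t ≤ T) :
    Tendsto (fun n => dyadicSum A T n s t) atTop (𝓝 (sewingMap A T s t)) :=
  (cauchySeq_of_le_geometric _ _ (Real.rpow_lt_one (by norm_num) (by norm_num) (by linarith))
    (hA.dist_dyadicSum_succ_le hT hθ.le hs hst htT)).tendsto_limUnder

theorem sewingMap_add [CompleteSpace E] (hA : IsAlmostAdditive A T θ C) (hT : 0 < T)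
    (hθ : 1 < θ) {r s t : ℝ} (hr : 0 ≤ r) (hrs : r ≤ s) (hst : s ≤ t) (htT : t ≤ T) :
    sewingMap A T r s + sewingMap A T s t = sewingMap A T r t := by
  have hlim := ((hA.tendsto_dyadicSum hT hθ hr (hrs.trans hst) htT).sub
    (hA.tendsto_dyadicSum hT hθ hr hrs (hst.trans htT))).sub
    (hA.tendsto_dyadicSum hT hθ (hr.trans hrs) hst htT)
  have hgeom : Tendsto (fun n : ℕ => C * (T / 2 ^ n) ^ (θ - 1) * (t - r)) atTop (𝓝 0) := by
    simp_rw [div_two_pow_rpow hT.le, ← mul_assoc]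
    simpa using ((tendsto_pow_atTop_nhds_zero_of_lt_one (r := (2⁻¹ : ℝ) ^ (θ - 1)) (by positivity)
      (Real.rpow_lt_one (by norm_num) (by norm_num) (by linarith))).const_mul
        (C * T ^ (θ - 1))).mul_const (t - r)
  have h := tendsto_nhds_unique hlim
    (squeeze_zero_norm (hA.norm_dyadicSum_sub_sub_le hT hθ.le hr hrs hst htT) hgeom)
  rw [sub_sub, sub_eq_zero] at h
  exact h.symm

theorem norm_sewingMap_sub_le [CompleteSpace E] (hA : IsAlmostAdditive A T θ C) (hT : 0 < T)
    (hθ : 1 < θ) {s t : ℝ} (hs : 0 ≤ s) (hst : s ≤ t) (htT : t ≤ T) :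
    ‖sewingMap A T s t - A s t‖ ≤
      (2 + 2 ^ (θ - 1) / (1 - (2⁻¹ : ℝ) ^ (θ - 1))) * C * (t - s) ^ θ := by
  rcases hst.eq_or_lt with rfl | hlt
  · have h := hA.sewingMap_add hT hθ hs le_rfl le_rfl htT
    rw [add_eq_right] at h
    simp [h, hA.apply_self (by linarith) hs htT, Real.zero_rpow (by linarith : θ ≠ 0)]
  have hr : (2⁻¹ : ℝ) ^ (θ - 1) < 1 := Real.rpow_lt_one (by norm_num) (by norm_num) (by linarith)
  have hC := hA.const_nonneg hT
  obtain ⟨N, hmesh, hmesh'⟩ := exists_le_div_two_pow_le (T := T) (sub_pos.2 hlt) (by linarith)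
  have htail := dist_le_of_le_geometric_of_tendsto _ _ hr
    (hA.dist_dyadicSum_succ_le hT hθ.le hs hst htT) (hA.tendsto_dyadicSum hT hθ hs hst htT) N
  rw [show C * T ^ (θ - 1) * (t - s) * ((2⁻¹ : ℝ) ^ (θ - 1)) ^ N =
    C * (T / 2 ^ N) ^ (θ - 1) * (t - s) by rw [div_two_pow_rpow hT.le]; ring] at htail
  have hcoarse := hA.norm_dyadicSum_sub_le hT (by linarith) hs hst htT hmesh
  have hpow : (T / 2 ^ N) ^ (θ - 1) * (t - s) ≤ 2 ^ (θ - 1) * (t - s) ^ θ := by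
    calc (T / 2 ^ N) ^ (θ - 1) * (t - s) ≤ (2 * (t - s)) ^ (θ - 1) * (t - s) := by
          gcongr
      _ = 2 ^ (θ - 1) * (t - s) ^ θ := by
          rw [Real.mul_rpow (by norm_num) (sub_pos.2 hlt).le, mul_assoc,
            ← Real.rpow_add_one' (sub_pos.2 hlt).le (by linarith), sub_add_cancel]
  calc ‖sewingMap A T s t - A s t‖
      ≤ dist (dyadicSum A T N s t) (sewingMap A T s t) + ‖dyadicSum A T N s t - A s t‖ := by
        rw [dist_comm, dist_eq_norm]
        exact norm_sub_le_norm_sub_add_norm_sub _ _ _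
    _ ≤ C * ((T / 2 ^ N) ^ (θ - 1) * (t - s)) / (1 - (2⁻¹ : ℝ) ^ (θ - 1)) +
          2 * (C * (t - s) ^ θ) := by
        rw [← mul_assoc]
        exact add_le_add htail hcoarse
    _ ≤ C * (2 ^ (θ - 1) * (t - s) ^ θ) / (1 - (2⁻¹ : ℝ) ^ (θ - 1)) +
          2 * (C * (t - s) ^ θ) := by
        gcongr
    _ = (2 + 2 ^ (θ - 1) / (1 - (2⁻¹ : ℝ) ^ (θ - 1))) * C * (t - s) ^ θ := by ring

theorem exists_hasLocalExpansion [CompleteSpace E] (hA : IsAlmostAdditive A T θ C) (hT : 0 < T)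
    (hθ : 1 < θ) : ∃ g, HasLocalExpansion g A T θ :=
  ⟨fun t => sewingMap A T 0 t, _, fun s t hs hst htT => by
    dsimp only
    rw [← hA.sewingMap_add hT hθ le_rfl hs hst htT, add_sub_cancel_left]
    exact hA.norm_sewingMap_sub_le hT hθ hs hst htT⟩

end IsAlmostAdditive

end Sewing

section LocalExpansion

variable {E : Type*} [NormedAddCommGroup E] {T θ : ℝ}

namespace HasLocalExpansion

variable {g g' : ℝ → E} {A A' : ℝ → ℝ → E}

theorem congr (h : HasLocalExpansion g A T θ) (hA : ∀ s t, A s t = A' s t) :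
    HasLocalExpansion g A' T θ := by
  simpa only [HasLocalExpansion, hA] using h

theorem sub (h : HasLocalExpansion g A T θ) (h' : HasLocalExpansion g' A' T θ) :
    HasLocalExpansion (fun t => g t - g' t) (fun s t => A s t - A' s t) T θ := by
  obtain ⟨K, hK⟩ := h
  obtain ⟨K', hK'⟩ := h'
  refine ⟨K + K', fun s t hs hst htT => ?_⟩
  calc ‖g t - g' t - (g s - g' s) - (A s t - A' s t)‖
      = ‖(g t - g s - A s t) - (g' t - g' s - A' s t)‖ := by congr 1; abel
    _ ≤ K * (t - s) ^ θ + K' * (t - s) ^ θ :=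
        (norm_sub_le _ _).trans (add_le_add (hK s t hs hst htT) (hK' s t hs hst htT))
    _ = (K + K') * (t - s) ^ θ := by ring

theorem const_smul [NormedSpace ℝ E] (h : HasLocalExpansion g A T θ) (c : ℝ) :
    HasLocalExpansion (fun t => c • g t) (fun s t => c • A s t) T θ := by
  obtain ⟨K, hK⟩ := h
  refine ⟨‖c‖ * K, fun s t hs hst htT => ?_⟩
  rw [← smul_sub, ← smul_sub, norm_smul, mul_assoc]
  exact mul_le_mul_of_nonneg_left (hK s t hs hst htT) (norm_nonneg c)

theorem sum {ι : Type*} (S : Finset ι) {g : ι → ℝ → E} {A : ι → ℝ → ℝ → E}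
    (h : ∀ i ∈ S, HasLocalExpansion (g i) (A i) T θ) :
    HasLocalExpansion (fun t => ∑ i ∈ S, g i t) (fun s t => ∑ i ∈ S, A i s t) T θ := by
  choose! K hK using h
  refine ⟨∑ i ∈ S, K i, fun s t hs hst htT => ?_⟩
  rw [← Finset.sum_sub_distrib, ← Finset.sum_sub_distrib, Finset.sum_mul]
  exact (norm_sum_le _ _).trans (Finset.sum_le_sum fun i hi => hK i hi s t hs hst htT)

theorem exists_const₃ {g₁ g₂ g₃ : ℝ → E} {A₁ A₂ A₃ : ℝ → ℝ → E}
    (h₁ : HasLocalExpansion g₁ A₁ T θ) (h₂ : HasLocalExpansion g₂ A₂ T θ)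
    (h₃ : HasLocalExpansion g₃ A₃ T θ) :
    ∃ C, ∀ s t, 0 ≤ s → s ≤ t → t ≤ T →
      ‖g₁ t - g₁ s - A₁ s t‖ ≤ C * (t - s) ^ θ ∧ ‖g₂ t - g₂ s - A₂ s t‖ ≤ C * (t - s) ^ θ ∧
        ‖g₃ t - g₃ s - A₃ s t‖ ≤ C * (t - s) ^ θ := by
  obtain ⟨K₁, hK₁⟩ := h₁
  obtain ⟨K₂, hK₂⟩ := h₂
  obtain ⟨K₃, hK₃⟩ := h₃
  refine ⟨max K₁ (max K₂ K₃), fun s t hs hst htT => ?_⟩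
  have hmono : ∀ {K}, K ≤ max K₁ (max K₂ K₃) →
      K * (t - s) ^ θ ≤ max K₁ (max K₂ K₃) * (t - s) ^ θ := fun hK =>
    mul_le_mul_of_nonneg_right hK (Real.rpow_nonneg (sub_nonneg.2 hst) _)
  exact ⟨(hK₁ s t hs hst htT).trans (hmono (le_max_left _ _)),
    (hK₂ s t hs hst htT).trans (hmono ((le_max_left _ _).trans (le_max_right _ _))),
    (hK₃ s t hs hst htT).trans (hmono ((le_max_right _ _).trans (le_max_right _ _)))⟩

end HasLocalExpansion

end LocalExpansion

section Holder

variable {F : Type*} [SeminormedAddCommGroup F]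

def HolderOnIcc (T β C : ℝ) (f : ℝ → F) : Prop :=
  ∀ s ∈ Icc 0 T, ∀ t ∈ Icc 0 T, ‖f t - f s‖ ≤ C * |t - s| ^ β

namespace HolderOnIcc

variable {T β C : ℝ} {f : ℝ → F}

theorem const_nonneg (hf : HolderOnIcc T β C f) (hT : 0 < T) : 0 ≤ C := by
  have h := (norm_nonneg _).trans (hf 0 ⟨le_rfl, hT.le⟩ T ⟨hT.le, le_rfl⟩)
  rw [sub_zero, abs_of_pos hT] at h
  exact nonneg_of_mul_nonneg_left h (Real.rpow_pos_of_pos hT β)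

theorem norm_sub_le (hf : HolderOnIcc T β C f) (hT : 0 < T) (hβ : 0 ≤ β) {a b L : ℝ}
    (ha : 0 ≤ a) (hab : a ≤ b) (hbT : b ≤ T) (hL : b - a ≤ L) : ‖f b - f a‖ ≤ C * L ^ β := by
  refine (hf a ⟨ha, hab.trans hbT⟩ b ⟨ha.trans hab, hbT⟩).trans ?_
  rw [abs_of_nonneg (sub_nonneg.2 hab)]
  exact mul_le_mul_of_nonneg_left (Real.rpow_le_rpow (sub_nonneg.2 hab) hL hβ) (hf.const_nonneg hT)

theorem norm_le (hf : HolderOnIcc T β C f) (hT : 0 < T) (hβ : 0 ≤ β) {t : ℝ} (ht : t ∈ Icc 0 T) :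
    ‖f t‖ ≤ ‖f 0‖ + C * T ^ β := by
  have h := hf.norm_sub_le hT hβ (L := T) le_rfl ht.1 ht.2 (by linarith [ht.2])
  linarith [norm_le_insert' (f t) (f 0)]

theorem comp {G : Type*} [SeminormedAddCommGroup G] {g : F → G} {L : ℝ}
    (hf : HolderOnIcc T β C f) (hg : ∀ x y, ‖g x - g y‖ ≤ L * ‖x - y‖) (hL : 0 ≤ L) :
    HolderOnIcc T β (L * C) fun t => g (f t) := fun s hs t ht =>
  (hg _ _).trans ((mul_le_mul_of_nonneg_left (hf s hs t ht) hL).trans_eq (mul_assoc _ _ _).symm)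

end HolderOnIcc

end Holder

section HolderNormed

variable {E F G : Type*} [NormedAddCommGroup E] [NormedSpace ℝ E] [NormedAddCommGroup F]
  [NormedSpace ℝ F] [NormedAddCommGroup G] [NormedSpace ℝ G] {T β : ℝ}

namespace HolderOnIcc

theorem clm_apply {C : ℝ} {f : ℝ → E →L[ℝ] F} (hf : HolderOnIcc T β C f) (v : E) :
    HolderOnIcc T β (C * ‖v‖) fun t => f t v := fun s hs t ht => by
  rw [← sub_apply, mul_right_comm]
  exact ((f t - f s).le_opNorm v).trans (mul_le_mul_of_nonneg_right (hf s hs t ht) (norm_nonneg v))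

theorem clm_apply₂ {CQ Ca Cb MQ Ma Mb : ℝ} {Q : ℝ → E →L[ℝ] F →L[ℝ] G} {a : ℝ → E} {b : ℝ → F}
    (hQ : HolderOnIcc T β CQ Q) (ha : HolderOnIcc T β Ca a) (hb : HolderOnIcc T β Cb b)
    (hQM : ∀ t ∈ Icc 0 T, ‖Q t‖ ≤ MQ) (haM : ∀ t ∈ Icc 0 T, ‖a t‖ ≤ Ma)
    (hbM : ∀ t ∈ Icc 0 T, ‖b t‖ ≤ Mb) :
    HolderOnIcc T β (CQ * Ma * Mb + MQ * Ca * Mb + MQ * Ma * Cb) fun t => Q t (a t) (b t) := by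
  intro s hs t ht
  have hMQ := le_trans (norm_nonneg (Q s)) (hQM s hs)
  have hMa := (norm_nonneg _).trans (haM s hs)
  have hMb := (norm_nonneg _).trans (hbM s hs)
  have hsplit : Q t (a t) (b t) - Q s (a s) (b s) =
      (Q t - Q s) (a t) (b t) + Q s (a t - a s) (b t) + Q s (a s) (b t - b s) := by
    simp only [map_sub, sub_apply]
    abel
  rw [hsplit]
  refine (norm_add₃_le ..).trans ?_
  have h₁ : ‖(Q t - Q s) (a t) (b t)‖ ≤ CQ * |t - s| ^ β * Ma * Mb :=
    ((Q t - Q s).le_opNorm₂ _ _).trans (mul_le_mul (mul_le_mul (hQ s hs t ht) (haM t ht)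
      (norm_nonneg _) (le_trans (norm_nonneg (Q t - Q s)) (hQ s hs t ht))) (hbM t ht)
      (norm_nonneg _) (mul_nonneg (le_trans (norm_nonneg (Q t - Q s)) (hQ s hs t ht)) hMa))
  have h₂ : ‖Q s (a t - a s) (b t)‖ ≤ MQ * (Ca * |t - s| ^ β) * Mb :=
    ((Q s).le_opNorm₂ _ _).trans (mul_le_mul (mul_le_mul (hQM s hs) (ha s hs t ht)
      (norm_nonneg _) hMQ) (hbM t ht) (norm_nonneg _)
      (mul_nonneg hMQ ((norm_nonneg _).trans (ha s hs t ht))))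
  have h₃ : ‖Q s (a s) (b t - b s)‖ ≤ MQ * Ma * (Cb * |t - s| ^ β) :=
    ((Q s).le_opNorm₂ _ _).trans (mul_le_mul (mul_le_mul (hQM s hs) (haM s hs)
      (norm_nonneg _) hMQ) (hb s hs t ht) (norm_nonneg _) (mul_nonneg hMQ hMa))
  linarith

theorem of_controlled {CX B R α : ℝ} {X : ℝ → E} {U : ℝ → F} {U' : ℝ → E →L[ℝ] F}
    (hX : HolderOnIcc T α CX X) (hU' : ∀ t ∈ Icc 0 T, ‖U' t‖ ≤ B)
    (hR : ∀ s ∈ Icc 0 T, ∀ t ∈ Icc 0 T, ‖U t - U s - U' s (X t - X s)‖ ≤ R * |t - s| ^ (2 * α))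
    (hα : 0 ≤ α) (hR0 : 0 ≤ R) : HolderOnIcc T α (B * CX + R * T ^ α) U := by
  intro s hs t ht
  have hts : |t - s| ≤ T := abs_sub_le_iff.2 ⟨by linarith [ht.2, hs.1], by linarith [hs.2, ht.1]⟩
  have hpow : |t - s| ^ (2 * α) ≤ T ^ α * |t - s| ^ α := by
    rw [two_mul, Real.rpow_add_of_nonneg (abs_nonneg _) hα hα]
    exact mul_le_mul_of_nonneg_right (Real.rpow_le_rpow (abs_nonneg _) hts hα)
      (Real.rpow_nonneg (abs_nonneg _) _)
  have hlin : ‖U' s (X t - X s)‖ ≤ B * (CX * |t - s| ^ α) :=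
    ((U' s).le_opNorm _).trans (mul_le_mul (hU' s hs) (hX s hs t ht) (norm_nonneg _)
      ((norm_nonneg _).trans (hU' s hs)))
  calc ‖U t - U s‖ ≤ ‖U t - U s - U' s (X t - X s)‖ + ‖U' s (X t - X s)‖ :=
        (norm_le_insert' _ _).trans_eq (add_comm _ _)
    _ ≤ R * (T ^ α * |t - s| ^ α) + B * (CX * |t - s| ^ α) :=
        add_le_add ((hR s hs t ht).trans (mul_le_mul_of_nonneg_left hpow hR0)) hlin
    _ = (B * CX + R * T ^ α) * |t - s| ^ α := by ring

end HolderOnIcc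

theorem exists_hasLocalExpansion_young [CompleteSpace G] (B : E →L[ℝ] F →L[ℝ] G) {f : ℝ → E}
    {x : ℝ → F} {γ Cf Cx : ℝ} (hT : 0 < T) (hβ : 0 ≤ β) (hγ : 0 ≤ γ) (hβγ : 1 < β + γ)
    (hf : HolderOnIcc T β Cf f) (hx : HolderOnIcc T γ Cx x) :
    ∃ g, HasLocalExpansion g (fun s t => B (f s) (x t - x s)) T (β + γ) := by
  refine IsAlmostAdditive.exists_hasLocalExpansion (C := ‖B‖ * Cf * Cx)
    (fun s u t hs hsu hut htT => ?_) hT hβγ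
  have hdelta : B (f s) (x t - x s) - B (f s) (x u - x s) - B (f u) (x t - x u) =
      B (f s - f u) (x t - x u) := by
    simp only [map_sub, sub_apply]
    abel
  have hf' : ‖f s - f u‖ ≤ Cf * (t - s) ^ β := by
    rw [norm_sub_rev]; exact hf.norm_sub_le hT hβ hs hsu (hut.trans htT) (by linarith)
  have hx' : ‖x t - x u‖ ≤ Cx * (t - s) ^ γ :=
    hx.norm_sub_le hT hγ (hs.trans hsu) hut htT (by linarith)
  rw [hdelta, Real.rpow_add' (by linarith) (by linarith)]
  calc ‖B (f s - f u) (x t - x u)‖ ≤ ‖B‖ * ‖f s - f u‖ * ‖x t - x u‖ := B.le_opNorm₂ _ _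
    _ ≤ ‖B‖ * (Cf * (t - s) ^ β) * (Cx * (t - s) ^ γ) := by
        gcongr
        exact mul_nonneg (norm_nonneg B) ((norm_nonneg _).trans hf')
    _ = ‖B‖ * Cf * Cx * ((t - s) ^ β * (t - s) ^ γ) := by ring

end HolderNormed

section Taylor

variable {E G : Type*} [NormedAddCommGroup E] [NormedSpace ℝ E] [NormedAddCommGroup G]
  [NormedSpace ℝ G]

theorem norm_sub_le_of_norm_fderiv_le {f : E → G} (hf : Differentiable ℝ f) {M : ℝ}
    (h : ∀ x, ‖fderiv ℝ f x‖ ≤ M) (x y : E) : ‖f x - f y‖ ≤ M * ‖x - y‖ :=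
  convex_univ.norm_image_sub_le_of_norm_fderiv_le (fun z _ => hf z) (fun z _ => h z)
    (mem_univ y) (mem_univ x)

/-- The hypothesis is `‖D³f x‖ ≤ M`, with the operator norm named explicitly: instance search
for the norm of `E →L[ℝ] E →L[ℝ] E →L[ℝ] G` times out. -/
theorem norm_fderiv_fderiv_sub_le {f : E → G} (hf : ContDiff ℝ 3 f) {M : ℝ}
    (h : ∀ x, (ContinuousLinearMap.hasOpNorm (E := E) (F := E →L[ℝ] E →L[ℝ] G)
      (σ₁₂ := RingHom.id ℝ)).norm (fderiv ℝ (fderiv ℝ (fderiv ℝ f)) x) ≤ M) (x y : E) :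
    ‖fderiv ℝ (fderiv ℝ f) x - fderiv ℝ (fderiv ℝ f) y‖ ≤ M * ‖x - y‖ := by
  let _ : NormedAddCommGroup (E →L[ℝ] E →L[ℝ] G) := inferInstance
  let _ : NormedSpace ℝ (E →L[ℝ] E →L[ℝ] G) := inferInstance
  exact norm_sub_le_of_norm_fderiv_le (((hf.fderiv_right (m := 2) (by norm_num)).fderiv_right
    (m := 1) (by norm_num)).differentiable one_ne_zero) h x y

theorem norm_image_sub_sub_fderiv_le {f : E → G} (hf : Differentiable ℝ f) {L : ℝ} (hL : 0 ≤ L)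
    (hLip : ∀ x y, ‖fderiv ℝ f x - fderiv ℝ f y‖ ≤ L * ‖x - y‖) (a b : E) :
    ‖f b - f a - fderiv ℝ f a (b - a)‖ ≤ L * ‖b - a‖ ^ 2 := by
  have h := (convex_closedBall a ‖b - a‖).norm_image_sub_le_of_norm_fderiv_le' (fun z _ => hf z)
    (fun z hz => (hLip z a).trans (mul_le_mul_of_nonneg_left (mem_closedBall_iff_norm.1 hz) hL))
    (Metric.mem_closedBall_self (norm_nonneg _)) (mem_closedBall_iff_norm.2 le_rfl)
  rwa [mul_assoc, ← sq] at h

theorem norm_image_sub_taylor_two_le {f : E → G} (hf : ContDiff ℝ 2 f) {M : ℝ} (hM : 0 ≤ M)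
    (hLip : ∀ x y, ‖fderiv ℝ (fderiv ℝ f) x - fderiv ℝ (fderiv ℝ f) y‖ ≤ M * ‖x - y‖) (a b : E) :
    ‖f b - f a - fderiv ℝ f a (b - a) - (1 / 2 : ℝ) • fderiv ℝ (fderiv ℝ f) a (b - a) (b - a)‖ ≤
      M * ‖b - a‖ ^ 3 := by
  have hf₁ : Differentiable ℝ f := hf.differentiable (by norm_num)
  have hf₂ : Differentiable ℝ (fderiv ℝ f) :=
    (hf.fderiv_right (m := 1) (by norm_num)).differentiable one_ne_zero
  set Q := fderiv ℝ (fderiv ℝ f) a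
  have hQ : ∀ v w, Q v w = Q w v :=
    second_derivative_symmetric (fun y => (hf₁ y).hasFDerivAt) (hf₂ a).hasFDerivAt
  have hshift : ∀ y : E, HasFDerivAt (fun x : E => x - a) (ContinuousLinearMap.id ℝ E) y :=
    fun y => (hasFDerivAt_id y).sub_const a
  -- the derivative of the Taylor remainder is the first-order remainder of `fderiv ℝ f`
  have hderiv : ∀ y, HasFDerivAt
      (fun x => f x - fderiv ℝ f a (x - a) - (1 / 2 : ℝ) • Q (x - a) (x - a))
      (fderiv ℝ f y - fderiv ℝ f a - Q (y - a)) y := by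
    intro y
    have hquad := ((Q.hasFDerivAt.comp y (hshift y)).clm_apply (hshift y)).const_smul (1 / 2 : ℝ)
    convert ((hf₁ y).hasFDerivAt.sub ((fderiv ℝ f a).hasFDerivAt.comp y (hshift y))).sub hquad
      using 1
    · funext x
      simp
    · refine ContinuousLinearMap.ext fun v => ?_
      simp only [map_sub, sub_apply, ContinuousLinearMap.comp_id, one_div, Function.comp_apply,
        smul_add, add_apply, smul_apply, ContinuousLinearMap.flip_apply, sub_right_inj]
      rw [hQ v y, hQ v a]
      module
  have h := (convex_closedBall a ‖b - a‖).norm_image_sub_le_of_norm_hasFDerivWithin_le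
    (fun y _ => (hderiv y).hasFDerivWithinAt)
    (fun y hy => (norm_image_sub_sub_fderiv_le hf₂ hM hLip a y).trans
      (mul_le_mul_of_nonneg_left (pow_le_pow_left₀ (norm_nonneg _)
        (mem_closedBall_iff_norm.1 hy) 2) hM))
    (Metric.mem_closedBall_self (norm_nonneg _)) (mem_closedBall_iff_norm.2 le_rfl)
  simp only [sub_self, map_zero, smul_zero, sub_zero] at h
  rw [mul_assoc, ← pow_succ] at h
  convert h using 2
  abel

end Taylor

section RoughBracket

variable {ι : Type*}

def roughBracket (X : ℝ → ι → ℝ) (XX : ℝ → ℝ → Matrix ι ι ℝ) (t : ℝ) (i j : ι) : ℝ :=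
  (X t i - X 0 i) * (X t j - X 0 j) - (XX 0 t i j + XX 0 t j i)

variable {X : ℝ → ι → ℝ} {XX : ℝ → ℝ → Matrix ι ι ℝ}

theorem roughBracket_sub {s t : ℝ}
    (hChen : ∀ i j, XX 0 t i j - XX 0 s i j - XX s t i j = (X s i - X 0 i) * (X t j - X s j))
    (i j : ι) :
    roughBracket X XX t i j - roughBracket X XX s i j =
      (X t i - X s i) * (X t j - X s j) - XX s t i j - XX s t j i := by
  simp only [roughBracket]
  linear_combination -hChen i j - hChen j i

theorem holderOnIcc_roughBracket [Fintype ι] {T α CX : ℝ} (hα : 0 ≤ α)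
    (hX : HolderOnIcc T α CX X)
    (hXX : ∀ s ∈ Icc 0 T, ∀ t ∈ Icc 0 T, ∀ i j, |XX s t i j| ≤ CX * |t - s| ^ (2 * α))
    (hChen : ∀ s ∈ Icc 0 T, ∀ u ∈ Icc 0 T, ∀ t ∈ Icc 0 T, ∀ i j,
      XX s t i j - XX s u i j - XX u t i j = (X u i - X s i) * (X t j - X u j))
    (i j : ι) : HolderOnIcc T (2 * α) (CX * CX + 2 * CX) fun t => roughBracket X XX t i j := by
  intro s hs t ht
  have h0 : (0 : ℝ) ∈ Icc 0 T := ⟨le_rfl, hs.1.trans hs.2⟩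
  have hcoord : ∀ k, |X t k - X s k| ≤ CX * |t - s| ^ α := fun k =>
    (norm_le_pi_norm (X t - X s) k).trans (hX s hs t ht)
  have hprod : |(X t i - X s i) * (X t j - X s j)| ≤ CX * CX * |t - s| ^ (2 * α) := by
    rw [abs_mul, two_mul, Real.rpow_add_of_nonneg (abs_nonneg _) hα hα]
    calc |X t i - X s i| * |X t j - X s j| ≤ CX * |t - s| ^ α * (CX * |t - s| ^ α) :=
          mul_le_mul (hcoord i) (hcoord j) (abs_nonneg _) ((abs_nonneg _).trans (hcoord i))
      _ = CX * CX * (|t - s| ^ α * |t - s| ^ α) := by ring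
  rw [Real.norm_eq_abs, roughBracket_sub (hChen 0 h0 s hs t ht)]
  calc |(X t i - X s i) * (X t j - X s j) - XX s t i j - XX s t j i|
      ≤ |(X t i - X s i) * (X t j - X s j)| + |XX s t i j| + |XX s t j i| :=
        (abs_sub _ _).trans (add_le_add_left (abs_sub _ _) _)
    _ ≤ CX * CX * |t - s| ^ (2 * α) + CX * |t - s| ^ (2 * α) + CX * |t - s| ^ (2 * α) :=
        add_le_add (add_le_add hprod (hXX s hs t ht i j)) (hXX s hs t ht j i)
    _ = (CX * CX + 2 * CX) * |t - s| ^ (2 * α) := by ring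

end RoughBracket

section Ito

variable {ι : Type*} [Fintype ι] [DecidableEq ι] {E G : Type*} [NormedAddCommGroup E]
  [NormedSpace ℝ E] [NormedAddCommGroup G] [NormedSpace ℝ G]

theorem sum_sum_bracket_smul (Q : E →L[ℝ] E →L[ℝ] G) (hQ : ∀ v w, Q v w = Q w v)
    (L : (ι → ℝ) →L[ℝ] E) (x : ι → ℝ) (m : Matrix ι ι ℝ) :
    ∑ i, ∑ j, (x i * x j - m i j - m j i) • Q (L (Pi.single i 1)) (L (Pi.single j 1)) =
      Q (L x) (L x) - (2 : ℝ) • ∑ i, ∑ j, m i j • Q (L (Pi.single i 1)) (L (Pi.single j 1)) := by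
  have hx : Q (L x) (L x) = ∑ i, ∑ j, (x i * x j) • Q (L (Pi.single i 1)) (L (Pi.single j 1)) := by
    conv_lhs => rw [pi_eq_sum_univ' x]
    simp only [map_sum, map_smul, sum_apply, smul_apply, Finset.smul_sum, smul_smul]
    rw [Finset.sum_comm]
    exact Finset.sum_congr rfl fun i _ => Finset.sum_congr rfl fun j _ => by rw [mul_comm]
  have hm : ∑ i, ∑ j, m j i • Q (L (Pi.single i 1)) (L (Pi.single j 1)) =
      ∑ i, ∑ j, m i j • Q (L (Pi.single i 1)) (L (Pi.single j 1)) := by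
    rw [Finset.sum_comm]
    exact Finset.sum_congr rfl fun i _ => Finset.sum_congr rfl fun j _ => by rw [hQ]
  simp only [sub_smul, Finset.sum_sub_distrib, hx, hm, two_smul]
  abel

theorem norm_apply_self_sub_apply_self_le (Q : E →L[ℝ] E →L[ℝ] G) (a b : E) :
    ‖Q a a - Q b b‖ ≤ ‖Q‖ * (‖a‖ + ‖b‖) * ‖a - b‖ := by
  have h : Q a a - Q b b = Q (a - b) a + Q b (a - b) := by
    simp only [map_sub, sub_apply]
    abel
  rw [h]
  calc ‖Q (a - b) a + Q b (a - b)‖ ≤ ‖Q‖ * ‖a - b‖ * ‖a‖ + ‖Q‖ * ‖b‖ * ‖a - b‖ :=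
        (norm_add_le _ _).trans (add_le_add (Q.le_opNorm₂ _ _) (Q.le_opNorm₂ _ _))
    _ = ‖Q‖ * (‖a‖ + ‖b‖) * ‖a - b‖ := by ring

theorem norm_ito_remainder_le {F : E → G} (hF : ContDiff ℝ 2 F) {M : ℝ} (hM : 0 ≤ M)
    (hLip : ∀ x y, ‖fderiv ℝ (fderiv ℝ F) x - fderiv ℝ (fderiv ℝ F) y‖ ≤ M * ‖x - y‖)
    (u₀ u₁ γ : E) (L : (ι → ℝ) →L[ℝ] E) (L₂ : (ι → ℝ) →L[ℝ] (ι → ℝ) →L[ℝ] E) (x : ι → ℝ)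
    (m : Matrix ι ι ℝ) :
    ‖F u₁ - F u₀ - (fderiv ℝ F u₀ (L x) + ∑ i, ∑ j, m i j •
        (fderiv ℝ (fderiv ℝ F) u₀ (L (Pi.single i 1)) (L (Pi.single j 1)) +
          fderiv ℝ F u₀ (L₂ (Pi.single i 1) (Pi.single j 1))) +
        fderiv ℝ F u₀ γ + (1 / 2 : ℝ) • ∑ i, ∑ j, (x i * x j - m i j - m j i) •
          fderiv ℝ (fderiv ℝ F) u₀ (L (Pi.single i 1)) (L (Pi.single j 1)))‖ ≤
      M * ‖u₁ - u₀‖ ^ 3 +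
        ‖fderiv ℝ F u₀‖ *
          ‖u₁ - u₀ - γ - L x - ∑ i, ∑ j, m i j • L₂ (Pi.single i 1) (Pi.single j 1)‖ +
        ‖fderiv ℝ (fderiv ℝ F) u₀‖ * (‖u₁ - u₀‖ + ‖L x‖) * ‖u₁ - u₀ - L x‖ := by
  set Q := fderiv ℝ (fderiv ℝ F) u₀
  have hQ : ∀ v w, Q v w = Q w v :=
    second_derivative_symmetric (fun y => ((hF.differentiable (by norm_num)) y).hasFDerivAt)
      ((hF.fderiv_right (m := 1) (by norm_num)).differentiable one_ne_zero u₀).hasFDerivAt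
  have hsplit : F u₁ - F u₀ - (fderiv ℝ F u₀ (L x) + ∑ i, ∑ j, m i j •
        (Q (L (Pi.single i 1)) (L (Pi.single j 1)) +
          fderiv ℝ F u₀ (L₂ (Pi.single i 1) (Pi.single j 1))) +
        fderiv ℝ F u₀ γ + (1 / 2 : ℝ) • ∑ i, ∑ j, (x i * x j - m i j - m j i) •
          Q (L (Pi.single i 1)) (L (Pi.single j 1))) =
      (F u₁ - F u₀ - fderiv ℝ F u₀ (u₁ - u₀) - (1 / 2 : ℝ) • Q (u₁ - u₀) (u₁ - u₀)) +
        fderiv ℝ F u₀ (u₁ - u₀ - γ - L x - ∑ i, ∑ j, m i j • L₂ (Pi.single i 1) (Pi.single j 1)) +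
        (1 / 2 : ℝ) • (Q (u₁ - u₀) (u₁ - u₀) - Q (L x) (L x)) := by
    rw [sum_sum_bracket_smul Q hQ]
    simp only [map_sub, map_sum, map_smul, smul_add, Finset.sum_add_distrib]
    module
  rw [hsplit]
  refine (norm_add₃_le ..).trans (add_le_add_three (norm_image_sub_taylor_two_le hF hM hLip _ _)
    ((fderiv ℝ F u₀).le_opNorm _) ?_)
  rw [norm_smul]
  refine (mul_le_of_le_one_left (norm_nonneg _) (by norm_num)).trans ?_
  exact norm_apply_self_sub_apply_self_le Q _ _

theorem hasLocalExpansion_ito {T α CX CU C₂ B M : ℝ} (hT : 0 < T) (hα : 0 < α)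
    {X : ℝ → ι → ℝ} {XX : ℝ → ℝ → Matrix ι ι ℝ} {U Γ : ℝ → E} {U' : ℝ → (ι → ℝ) →L[ℝ] E}
    {U'' : ℝ → (ι → ℝ) →L[ℝ] (ι → ℝ) →L[ℝ] E} {F : E → G}
    (hX : HolderOnIcc T α CX X)
    (hChen : ∀ s ∈ Icc 0 T, ∀ u ∈ Icc 0 T, ∀ t ∈ Icc 0 T, ∀ i j,
      XX s t i j - XX s u i j - XX u t i j = (X u i - X s i) * (X t j - X u j))
    (hUH : HolderOnIcc T α C₂ U) (hB : ∀ t ∈ Icc 0 T, ‖U' t‖ ≤ B)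
    (hctrl : ∀ s ∈ Icc 0 T, ∀ t ∈ Icc 0 T,
      ‖U t - U s - U' s (X t - X s)‖ ≤ CU * |t - s| ^ (2 * α))
    (hU : ∀ s ∈ Icc 0 T, ∀ t ∈ Icc 0 T, s ≤ t →
      ‖U t - U s - (Γ t - Γ s) - U' s (X t - X s) -
          ∑ i, ∑ j, XX s t i j • U'' s (Pi.single i 1) (Pi.single j 1)‖
        ≤ CU * (t - s) ^ (3 * α))
    (hF : ContDiff ℝ 2 F) (hM : 0 ≤ M)
    (hLip : ∀ x y, ‖fderiv ℝ (fderiv ℝ F) x - fderiv ℝ (fderiv ℝ F) y‖ ≤ M * ‖x - y‖)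
    (hD2 : ∀ x, ‖fderiv ℝ (fderiv ℝ F) x‖ ≤ M) (hD1 : ∀ t ∈ Icc 0 T, ‖fderiv ℝ F (U t)‖ ≤ M) :
    HasLocalExpansion (fun t => F (U t))
      (fun s t => fderiv ℝ F (U s) (U' s (X t - X s)) + ∑ i, ∑ j, XX s t i j •
          (fderiv ℝ (fderiv ℝ F) (U s) (U' s (Pi.single i 1)) (U' s (Pi.single j 1)) +
            fderiv ℝ F (U s) (U'' s (Pi.single i 1) (Pi.single j 1))) +
        fderiv ℝ F (U s) (Γ t - Γ s) + (1 / 2 : ℝ) • ∑ i, ∑ j,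
          (roughBracket X XX t i j - roughBracket X XX s i j) •
            fderiv ℝ (fderiv ℝ F) (U s) (U' s (Pi.single i 1)) (U' s (Pi.single j 1)))
      T (3 * α) := by
  refine ⟨M * C₂ ^ 3 + M * CU + M * (C₂ + B * CX) * CU, fun s t hs hst htT => ?_⟩
  have hs' : s ∈ Icc 0 T := ⟨hs, hst.trans htT⟩
  have ht' : t ∈ Icc 0 T := ⟨hs.trans hst, htT⟩
  have hB0 : 0 ≤ B := (norm_nonneg _).trans (hB s hs')
  have hCX := hX.const_nonneg hT
  have hC₂ := hUH.const_nonneg hT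
  have hδ : ‖U t - U s‖ ≤ C₂ * (t - s) ^ α := hUH.norm_sub_le hT hα.le hs hst htT le_rfl
  have hlin : ‖U' s (X t - X s)‖ ≤ B * (CX * (t - s) ^ α) :=
    ((U' s).le_opNorm _).trans (mul_le_mul (hB s hs') (hX.norm_sub_le hT hα.le hs hst htT le_rfl)
      (norm_nonneg _) hB0)
  have hR : ‖U t - U s - U' s (X t - X s)‖ ≤ CU * (t - s) ^ (2 * α) := by
    simpa only [abs_of_nonneg (sub_nonneg.2 hst)] using hctrl s hs' t ht'
  set h := t - s
  have hh0 : 0 ≤ h := sub_nonneg.2 hst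
  have hpow₂ : h ^ (2 * α) = h ^ α * h ^ α := by
    rw [two_mul, Real.rpow_add_of_nonneg hh0 hα.le hα.le]
  have hpow₃ : h ^ (3 * α) = h ^ α * h ^ α * h ^ α := by
    rw [show 3 * α = α + α + α by ring, Real.rpow_add_of_nonneg hh0 (by positivity) hα.le,
      Real.rpow_add_of_nonneg hh0 hα.le hα.le]
  simp only [roughBracket_sub (hChen 0 ⟨le_rfl, hT.le⟩ s hs' t ht')]
  refine (norm_ito_remainder_le hF hM hLip (U s) (U t) (Γ t - Γ s) (U' s) (U'' s) (X t - X s)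
    (XX s t)).trans ?_
  calc _ ≤ M * (C₂ * h ^ α) ^ 3 + M * (CU * h ^ (3 * α)) +
        M * (C₂ * h ^ α + B * (CX * h ^ α)) * (CU * h ^ (2 * α)) := by
        gcongr
        · exact hD1 s hs'
        · exact hU s hs' t ht' hst
        · exact hD2 _
    _ = (M * C₂ ^ 3 + M * CU + M * (C₂ + B * CX) * CU) * h ^ (3 * α) := by
        rw [hpow₂, hpow₃]
        ring

theorem exists_hasLocalExpansion_roughBracket [CompleteSpace G] {T α CX CQ CV MQ MV : ℝ}
    (hT : 0 < T) (hα : 0 < α) (hα₃ : 1 < 3 * α)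
    {X : ℝ → ι → ℝ} {XX : ℝ → ℝ → Matrix ι ι ℝ} (hX : HolderOnIcc T α CX X)
    (hXX : ∀ s ∈ Icc 0 T, ∀ t ∈ Icc 0 T, ∀ i j, |XX s t i j| ≤ CX * |t - s| ^ (2 * α))
    (hChen : ∀ s ∈ Icc 0 T, ∀ u ∈ Icc 0 T, ∀ t ∈ Icc 0 T, ∀ i j,
      XX s t i j - XX s u i j - XX u t i j = (X u i - X s i) * (X t j - X u j))
    {Q : ℝ → E →L[ℝ] E →L[ℝ] G} {V : ℝ → (ι → ℝ) →L[ℝ] E} (hQ : HolderOnIcc T α CQ Q)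
    (hV : HolderOnIcc T α CV V) (hQM : ∀ t ∈ Icc 0 T, ‖Q t‖ ≤ MQ)
    (hVM : ∀ t ∈ Icc 0 T, ‖V t‖ ≤ MV) :
    ∃ g, HasLocalExpansion g (fun s t => ∑ i, ∑ j,
      (roughBracket X XX t i j - roughBracket X XX s i j) •
        Q s (V s (Pi.single i 1)) (V s (Pi.single j 1))) T (3 * α) := by
  have hVv : ∀ v, ∀ t ∈ Icc 0 T, ‖V t v‖ ≤ MV * ‖v‖ := fun v t ht =>
    ((V t).le_opNorm v).trans (mul_le_mul_of_nonneg_right (hVM t ht) (norm_nonneg v))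
  have hyoung : ∀ i j, ∃ g, HasLocalExpansion g
      (fun s t => (roughBracket X XX t i j - roughBracket X XX s i j) •
        Q s (V s (Pi.single i 1)) (V s (Pi.single j 1))) T (3 * α) := fun i j => by
    simpa only [ContinuousLinearMap.flip_apply, ContinuousLinearMap.lsmul_apply,
      show α + 2 * α = 3 * α by ring] using exists_hasLocalExpansion_young
        (ContinuousLinearMap.lsmul ℝ ℝ).flip hT hα.le (by positivity) (by linarith)
        (hQ.clm_apply₂ (hV.clm_apply _) (hV.clm_apply _) hQM (hVv _) (hVv _))
        (holderOnIcc_roughBracket hα.le hX hXX hChen i j)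
  choose g hg using hyoung
  exact ⟨fun t => ∑ i, ∑ j, g i j t,
    HasLocalExpansion.sum _ fun i _ => HasLocalExpansion.sum _ fun j _ => hg i j⟩

end Ito

theorem stmt10_general {E₂ E₃ : Type*}
    [NormedAddCommGroup E₂] [NormedSpace ℝ E₂]
    [NormedAddCommGroup E₃] [NormedSpace ℝ E₃] [CompleteSpace E₃]
    (d : ℕ) (T α : ℝ) (hT : 0 < T) (hα1 : 1 / 3 < α)
    (X : ℝ → (Fin d → ℝ)) (XX : ℝ → ℝ → Matrix (Fin d) (Fin d) ℝ)
    (CX : ℝ)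
    (hX : ∀ s ∈ Icc 0 T, ∀ t ∈ Icc 0 T, ‖X t - X s‖ ≤ CX * |t - s| ^ α)
    (hXX : ∀ s ∈ Icc 0 T, ∀ t ∈ Icc 0 T, ∀ i j, |XX s t i j| ≤ CX * |t - s| ^ (2 * α))
    (hChen : ∀ s ∈ Icc 0 T, ∀ u ∈ Icc 0 T, ∀ t ∈ Icc 0 T, ∀ i j,
      XX s t i j - XX s u i j - XX u t i j = (X u i - X s i) * (X t j - X u j))
    (U Γ : ℝ → E₂)
    (U' : ℝ → ((Fin d → ℝ) →L[ℝ] E₂))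
    (U'' : ℝ → ((Fin d → ℝ) →L[ℝ] ((Fin d → ℝ) →L[ℝ] E₂)))
    (CU : ℝ)
    (hΓ : ∀ s ∈ Icc 0 T, ∀ t ∈ Icc 0 T, ‖Γ t - Γ s‖ ≤ CU * |t - s| ^ (2 * α))
    (hU'H : ∀ s ∈ Icc 0 T, ∀ t ∈ Icc 0 T, ‖U' t - U' s‖ ≤ CU * |t - s| ^ α)
    (hctrl : ∀ s ∈ Icc 0 T, ∀ t ∈ Icc 0 T,
      ‖U t - U s - U' s (X t - X s)‖ ≤ CU * |t - s| ^ (2 * α))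
    -- `U_t = Γ_t + ∫_0^t U'_s d𝐗_s` (local expansion of the rough integral)
    (hU : ∀ s ∈ Icc 0 T, ∀ t ∈ Icc 0 T, s ≤ t →
      ‖U t - U s - (Γ t - Γ s) - U' s (X t - X s) -
          ∑ i : Fin d, ∑ j : Fin d, XX s t i j • U'' s (Pi.single i 1) (Pi.single j 1)‖
        ≤ CU * (t - s) ^ (3 * α))
    (F : E₂ → E₃) (hF : ContDiff ℝ 3 F)
    (M : ℝ)
    (hD2 : ∀ x, ‖fderiv ℝ (fderiv ℝ F) x‖ ≤ M)
    (hD3 : ∀ x, (ContinuousLinearMap.hasOpNorm (E := E₂) (F := E₂ →L[ℝ] E₂ →L[ℝ] E₃)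
      (σ₁₂ := RingHom.id ℝ)).norm (fderiv ℝ (fderiv ℝ (fderiv ℝ F)) x) ≤ M)
    (hD1 : ∀ t ∈ Icc 0 T, ‖fderiv ℝ F (U t)‖ ≤ M) :
    ∃ (Z₁ Z₂ Z₃ : ℝ → ℝ → E₃) (C : ℝ),
      (∀ s ∈ Icc 0 T, ∀ u ∈ Icc 0 T, ∀ t ∈ Icc 0 T,
        Z₁ s u + Z₁ u t = Z₁ s t ∧ Z₂ s u + Z₂ u t = Z₂ s t ∧ Z₃ s u + Z₃ u t = Z₃ s t) ∧
      -- `Z₁ = ∫ DF(U)U' d𝐗`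
      (∀ s ∈ Icc 0 T, ∀ t ∈ Icc 0 T, s ≤ t →
        ‖Z₁ s t - fderiv ℝ F (U s) (U' s (X t - X s)) -
            ∑ i : Fin d, ∑ j : Fin d, XX s t i j •
              (fderiv ℝ (fderiv ℝ F) (U s) (U' s (Pi.single i 1)) (U' s (Pi.single j 1)) +
                fderiv ℝ F (U s) (U'' s (Pi.single i 1) (Pi.single j 1)))‖
          ≤ C * (t - s) ^ (3 * α)) ∧
      -- `Z₂ = ∫ DF(U) dΓ` (Young)
      (∀ s ∈ Icc 0 T, ∀ t ∈ Icc 0 T, s ≤ t →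
        ‖Z₂ s t - fderiv ℝ F (U s) (Γ t - Γ s)‖ ≤ C * (t - s) ^ (3 * α)) ∧
      -- `Z₃ = ∫ D²F(U)(U',U') d[𝐗]` (Young), where
      -- `[𝐗]_t i j = δX_{0,t}ᵢ δX_{0,t}ⱼ − (𝕏_{0,t} i j + 𝕏_{0,t} j i)`
      (∀ s ∈ Icc 0 T, ∀ t ∈ Icc 0 T, s ≤ t →
        ‖Z₃ s t - ∑ i : Fin d, ∑ j : Fin d,
              (((X t i - X 0 i) * (X t j - X 0 j) - (XX 0 t i j + XX 0 t j i)) -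
                ((X s i - X 0 i) * (X s j - X 0 j) - (XX 0 s i j + XX 0 s j i))) •
              fderiv ℝ (fderiv ℝ F) (U s) (U' s (Pi.single i 1)) (U' s (Pi.single j 1))‖
          ≤ C * (t - s) ^ (3 * α)) ∧
      -- the rough Itô formula
      (∀ t ∈ Icc 0 T,
        F (U t) = F (U 0) + Z₁ 0 t + Z₂ 0 t + (1 / 2 : ℝ) • Z₃ 0 t) := by
  have hα : 0 < α := by linarith
  have hM : 0 ≤ M := le_trans (norm_nonneg (fderiv ℝ (fderiv ℝ F) 0)) (hD2 0)
  have hF₂ : ContDiff ℝ 2 F := hF.of_le (by norm_num)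
  have hLip := norm_fderiv_fderiv_sub_le hF hD3
  obtain ⟨B, hB⟩ : ∃ B, ∀ t ∈ Icc 0 T, ‖U' t‖ ≤ B :=
    ⟨_, fun t => HolderOnIcc.norm_le hU'H hT hα.le⟩
  have hUH := HolderOnIcc.of_controlled hX hB hctrl hα.le (HolderOnIcc.const_nonneg hΓ hT)
  obtain ⟨g₂, hg₂⟩ :
      ∃ g, HasLocalExpansion g (fun s t => fderiv ℝ F (U s) (Γ t - Γ s)) T (3 * α) := by
    simpa only [ContinuousLinearMap.id_apply, show α + 2 * α = 3 * α by ring] using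
      exists_hasLocalExpansion_young (ContinuousLinearMap.id ℝ (E₂ →L[ℝ] E₃)) hT hα.le
        (by positivity) (by linarith) (hUH.comp (norm_sub_le_of_norm_fderiv_le
          ((hF₂.fderiv_right (m := 1) (by norm_num)).differentiable one_ne_zero) hD2) hM) hΓ
  obtain ⟨g₃, hg₃⟩ := exists_hasLocalExpansion_roughBracket hT hα (by linarith) hX hXX hChen
    (hUH.comp hLip hM) hU'H (fun _ _ => hD2 _) hB
  have hg₁ : HasLocalExpansion (fun t => F (U t) - g₂ t - (1 / 2 : ℝ) • g₃ t)
      (fun s t => fderiv ℝ F (U s) (U' s (X t - X s)) + ∑ i, ∑ j, XX s t i j •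
        (fderiv ℝ (fderiv ℝ F) (U s) (U' s (Pi.single i 1)) (U' s (Pi.single j 1)) +
          fderiv ℝ F (U s) (U'' s (Pi.single i 1) (Pi.single j 1)))) T (3 * α) :=
    (((hasLocalExpansion_ito hT hα hX hChen hUH hB hctrl hU hF₂ hM hLip hD2 hD1).sub hg₂).sub
      (hg₃.const_smul (1 / 2 : ℝ))).congr fun s t => by abel
  simp only [roughBracket] at hg₃
  obtain ⟨C, hC⟩ := hg₁.exists_const₃ hg₂ hg₃
  refine ⟨fun s t => F (U t) - g₂ t - (1 / 2 : ℝ) • g₃ t - (F (U s) - g₂ s - (1 / 2 : ℝ) • g₃ s),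
    fun s t => g₂ t - g₂ s, fun s t => g₃ t - g₃ s, C,
    fun _ _ _ _ _ _ => ⟨sub_add_sub_cancel' .., sub_add_sub_cancel' .., sub_add_sub_cancel' ..⟩,
    fun s hs t ht hst => ?_, fun s hs t ht hst => (hC s t hs.1 hst ht.2).2.1,
    fun s hs t ht hst => (hC s t hs.1 hst ht.2).2.2, fun t _ => by module⟩
  rw [sub_sub]
  exact (hC s t hs.1 hst ht.2).1

/-- (Rough Itô formula.)  Let `E₂, E₃` be Banach spaces and `F : E₂ → E₃` a
`C³` map with `D²F` and `D³F` globally bounded and `DF` bounded on the image of `U`.  Let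
`𝐗 = (X, 𝕏)` be an `α`-Hölder rough path over `ℝᵈ` (`α ∈ (1/3,1/2)`, Chen's relation holds),
and let `(U,U') ∈ 𝒟^{2α}_X([0,T],E₂)` satisfy `U_t = Γ_t + ∫_0^t U'_s d𝐗_s` with
`Γ ∈ C^{2α}` and `(U',U'') ∈ 𝒟^{2α}_X([0,T], L(ℝᵈ,E₂))`.  Then
`F(U_t) = F(U_0) + ∫_0^t DF(U_s)U'_s d𝐗_s + ∫_0^t DF(U_s) dΓ_s
          + ½∫_0^t D²F(U_s)(U'_s,U'_s) d[𝐗]_s`,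
where `[𝐗]_t = δX_{0,t} ⊗ δX_{0,t} − 2Sym(𝕏_{0,t})`, the rough integral is characterized as
the additive function with the usual `(t−s)^{3α}` local expansion, and the last two integrals
are Young integrals, characterized analogously. -/
theorem stmt10 {E₂ E₃ : Type*}
    [NormedAddCommGroup E₂] [NormedSpace ℝ E₂] [CompleteSpace E₂]
    [NormedAddCommGroup E₃] [NormedSpace ℝ E₃] [CompleteSpace E₃]
    (d : ℕ) (T α : ℝ) (hT : 0 < T) (hα1 : 1 / 3 < α) (hα2 : α < 1 / 2)
    (X : ℝ → (Fin d → ℝ)) (XX : ℝ → ℝ → Matrix (Fin d) (Fin d) ℝ)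
    (CX : ℝ)
    (hX : ∀ s ∈ Icc 0 T, ∀ t ∈ Icc 0 T, ‖X t - X s‖ ≤ CX * |t - s| ^ α)
    (hXX : ∀ s ∈ Icc 0 T, ∀ t ∈ Icc 0 T, ∀ i j, |XX s t i j| ≤ CX * |t - s| ^ (2 * α))
    (hChen : ∀ s ∈ Icc 0 T, ∀ u ∈ Icc 0 T, ∀ t ∈ Icc 0 T, ∀ i j,
      XX s t i j - XX s u i j - XX u t i j = (X u i - X s i) * (X t j - X u j))
    (U Γ : ℝ → E₂)
    (U' : ℝ → ((Fin d → ℝ) →L[ℝ] E₂))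
    (U'' : ℝ → ((Fin d → ℝ) →L[ℝ] ((Fin d → ℝ) →L[ℝ] E₂)))
    (CU : ℝ)
    (hΓ : ∀ s ∈ Icc 0 T, ∀ t ∈ Icc 0 T, ‖Γ t - Γ s‖ ≤ CU * |t - s| ^ (2 * α))
    (hU'H : ∀ s ∈ Icc 0 T, ∀ t ∈ Icc 0 T, ‖U' t - U' s‖ ≤ CU * |t - s| ^ α)
    (hU''H : ∀ s ∈ Icc 0 T, ∀ t ∈ Icc 0 T, ‖U'' t - U'' s‖ ≤ CU * |t - s| ^ α)
    (hctrl : ∀ s ∈ Icc 0 T, ∀ t ∈ Icc 0 T,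
      ‖U t - U s - U' s (X t - X s)‖ ≤ CU * |t - s| ^ (2 * α))
    (hctrl' : ∀ s ∈ Icc 0 T, ∀ t ∈ Icc 0 T,
      ‖U' t - U' s - U'' s (X t - X s)‖ ≤ CU * |t - s| ^ (2 * α))
    -- `U_t = Γ_t + ∫_0^t U'_s d𝐗_s` (local expansion of the rough integral)
    (hU : ∀ s ∈ Icc 0 T, ∀ t ∈ Icc 0 T, s ≤ t →
      ‖U t - U s - (Γ t - Γ s) - U' s (X t - X s) -
          ∑ i : Fin d, ∑ j : Fin d, XX s t i j • U'' s (Pi.single i 1) (Pi.single j 1)‖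
        ≤ CU * (t - s) ^ (3 * α))
    (F : E₂ → E₃) (hF : ContDiff ℝ 3 F)
    (M : ℝ)
    (hD2 : ∀ x, ‖fderiv ℝ (fderiv ℝ F) x‖ ≤ M)
    (hD3 : ∀ x, (ContinuousLinearMap.hasOpNorm (E := E₂) (F := E₂ →L[ℝ] E₂ →L[ℝ] E₃)
      (σ₁₂ := RingHom.id ℝ)).norm (fderiv ℝ (fderiv ℝ (fderiv ℝ F)) x) ≤ M)
    (hD1 : ∀ t ∈ Icc 0 T, ‖fderiv ℝ F (U t)‖ ≤ M) :
    ∃ (Z₁ Z₂ Z₃ : ℝ → ℝ → E₃) (C : ℝ),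
      (∀ s ∈ Icc 0 T, ∀ u ∈ Icc 0 T, ∀ t ∈ Icc 0 T,
        Z₁ s u + Z₁ u t = Z₁ s t ∧ Z₂ s u + Z₂ u t = Z₂ s t ∧ Z₃ s u + Z₃ u t = Z₃ s t) ∧
      -- `Z₁ = ∫ DF(U)U' d𝐗`
      (∀ s ∈ Icc 0 T, ∀ t ∈ Icc 0 T, s ≤ t →
        ‖Z₁ s t - fderiv ℝ F (U s) (U' s (X t - X s)) -
            ∑ i : Fin d, ∑ j : Fin d, XX s t i j •
              (fderiv ℝ (fderiv ℝ F) (U s) (U' s (Pi.single i 1)) (U' s (Pi.single j 1)) +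
                fderiv ℝ F (U s) (U'' s (Pi.single i 1) (Pi.single j 1)))‖
          ≤ C * (t - s) ^ (3 * α)) ∧
      -- `Z₂ = ∫ DF(U) dΓ` (Young)
      (∀ s ∈ Icc 0 T, ∀ t ∈ Icc 0 T, s ≤ t →
        ‖Z₂ s t - fderiv ℝ F (U s) (Γ t - Γ s)‖ ≤ C * (t - s) ^ (3 * α)) ∧
      -- `Z₃ = ∫ D²F(U)(U',U') d[𝐗]` (Young), where
      -- `[𝐗]_t i j = δX_{0,t}ᵢ δX_{0,t}ⱼ − (𝕏_{0,t} i j + 𝕏_{0,t} j i)`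
      (∀ s ∈ Icc 0 T, ∀ t ∈ Icc 0 T, s ≤ t →
        ‖Z₃ s t - ∑ i : Fin d, ∑ j : Fin d,
              (((X t i - X 0 i) * (X t j - X 0 j) - (XX 0 t i j + XX 0 t j i)) -
                ((X s i - X 0 i) * (X s j - X 0 j) - (XX 0 s i j + XX 0 s j i))) •
              fderiv ℝ (fderiv ℝ F) (U s) (U' s (Pi.single i 1)) (U' s (Pi.single j 1))‖
          ≤ C * (t - s) ^ (3 * α)) ∧
      -- the rough Itô formula
      (∀ t ∈ Icc 0 T,
        F (U t) = F (U 0) + Z₁ 0 t + Z₂ 0 t + (1 / 2 : ℝ) • Z₃ 0 t) :=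
  stmt10_general d T α hT hα1 X XX CX hX hXX hChen U Γ U' U'' CU hΓ hU'H hctrl hU F hF M hD2 hD3 hD1
end

section
/- Let (U,U') be a controlled rough path with respect to B on [τ₀,τ] with values in ℝ^m, so that δU_{s,t} = U'_s δB_{s,t} + R^U_{s,t}, and suppose B is θ-Hölder rough with modulus L_θ(B), where θ < 2α. Then for every t, |U'_t| ≤ K L_θ(B)^{−1} ‖U‖_∞^{1−θ/(2α)} ( ‖R^U‖_{2α}^{θ/(2α)} + ‖U‖_∞^{θ/(2α)} ), where K depends only on α, θ and the length of the interval. -/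
open Set

lemma opnorm_row_bound {d m : ℕ} (f : (Fin d → ℝ) →L[ℝ] (Fin m → ℝ)) (C : ℝ) (hC : 0 ≤ C)
    (h : ∀ j i, |f (Pi.single i 1 : Fin d → ℝ) j| ≤ C) : ‖f‖ ≤ d * C := by
  refine f.opNorm_le_bound (by positivity) fun x => ?_
  have hx0 : x = ∑ i, x i • (Pi.single i 1 : Fin d → ℝ) := by
    funext j
    simp [Finset.sum_apply, Pi.single_apply]
  have hx : f x = ∑ i, x i • f (Pi.single i 1 : Fin d → ℝ) := by
    conv_lhs => rw [hx0]
    simp [map_sum]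
  rw [hx]
  have hnn : (0:ℝ) ≤ ↑d * C * ‖x‖ := by positivity
  rw [pi_norm_le_iff_of_nonneg hnn]
  intro j
  have : (∑ i, x i • f (Pi.single i 1 : Fin d → ℝ)) j = ∑ i, x i * f (Pi.single i 1 : Fin d → ℝ) j := by
    simp [Finset.sum_apply]
  rw [Real.norm_eq_abs, this]
  calc |∑ i, x i * f (Pi.single i 1 : Fin d → ℝ) j| ≤ ∑ i, |x i * f (Pi.single i 1 : Fin d → ℝ) j| :=
        Finset.abs_sum_le_sum_abs _ _
    _ ≤ ∑ _i : Fin d, ‖x‖ * C := by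
        refine Finset.sum_le_sum fun i _ => ?_
        rw [abs_mul]
        exact mul_le_mul (by simpa using norm_le_pi_norm x i) (h j i) (abs_nonneg _) (norm_nonneg _)
    _ = ↑d * C * ‖x‖ := by simp [Finset.sum_const]; ring

lemma apply_eq_sum {d m : ℕ} (f : (Fin d → ℝ) →L[ℝ] (Fin m → ℝ)) (x : Fin d → ℝ) (j : Fin m) :
    f x j = ∑ i, x i * f (Pi.single i 1 : Fin d → ℝ) j := by
  have hx0 : x = ∑ i, x i • (Pi.single i 1 : Fin d → ℝ) := by
    funext j; simp [Finset.sum_apply, Pi.single_apply]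
  conv_lhs => rw [hx0]
  simp [map_sum, Finset.sum_apply]


/-- Let `(U,U')` be a controlled rough path with respect to `B` on
`[τ₀,τ]` with values in `ℝᵐ`, `δU_{s,t} = U'_s δB_{s,t} + R^U_{s,t}`, and suppose `B` is
`θ`-Hölder rough with modulus `L_θ(B) = L`, `θ < 2α`.  Then for every `t ∈ [τ₀,τ]`,
`‖U'_t‖ ≤ K L⁻¹ ‖U‖_∞^{1−θ/(2α)} (‖R^U‖_{2α}^{θ/(2α)} + ‖U‖_∞^{θ/(2α)})`,
with `K` depending only on `α`, `θ` and the length of the interval. -/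
theorem stmt12 (d m : ℕ) (α θ τ₀ τ : ℝ) (hα1 : 0 < α) (hα2 : α ≤ 1)
    (hθ0 : 0 < θ) (hθ : θ < 2 * α) (hττ : τ₀ < τ) :
    ∃ K : ℝ, 0 < K ∧
      ∀ (B : ℝ → (Fin d → ℝ)) (U : ℝ → (Fin m → ℝ))
        (U' : ℝ → ((Fin d → ℝ) →L[ℝ] (Fin m → ℝ))) (L MU CR : ℝ),
        0 < L → 0 ≤ MU → 0 ≤ CR →
        -- `B` is θ-Hölder rough with modulus `L`
        (∀ v : Fin d → ℝ, (∑ i, v i ^ 2) = 1 → ∀ s ∈ Icc τ₀ τ,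
          ∀ ε : ℝ, 0 < ε → ε ≤ τ - τ₀ →
            ∃ t ∈ Icc τ₀ τ, |t - s| ≤ ε ∧ L * ε ^ θ ≤ |∑ i, v i * (B t i - B s i)|) →
        (∀ t ∈ Icc τ₀ τ, ‖U t‖ ≤ MU) →
        (∀ s ∈ Icc τ₀ τ, ∀ t ∈ Icc τ₀ τ,
          ‖U t - U s - U' s (B t - B s)‖ ≤ CR * |t - s| ^ (2 * α)) →
        ∀ t ∈ Icc τ₀ τ,
          ‖U' t‖ ≤ K * L⁻¹ * MU ^ (1 - θ / (2 * α)) *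
            (CR ^ (θ / (2 * α)) + MU ^ (θ / (2 * α))) := by
  have h2α : (0:ℝ) < 2 * α := by linarith
  set T : ℝ := τ - τ₀ with hTdef
  have hT0 : 0 < T := by simp only [hTdef]; linarith
  set β : ℝ := θ / (2 * α) with hβdef
  have hβ0 : 0 < β := div_pos hθ0 h2α
  have hβ1 : β < 1 := (div_lt_one h2α).2 hθ
  set K : ℝ := 3 * (d + 1) * (max T⁻¹ 1) ^ θ with hKdef
  have hmax1 : (1:ℝ) ≤ (max T⁻¹ 1) ^ θ := by
    calc (1:ℝ) = 1 ^ θ := (Real.one_rpow θ).symm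
      _ ≤ (max T⁻¹ 1) ^ θ := Real.rpow_le_rpow zero_le_one (le_max_right _ _) hθ0.le
  have hmaxT : (T ^ θ)⁻¹ ≤ (max T⁻¹ 1) ^ θ := by
    rw [← Real.inv_rpow hT0.le]
    exact Real.rpow_le_rpow (inv_nonneg.2 hT0.le) (le_max_left _ _) hθ0.le
  have hK0 : 0 < K := by
    have : (0:ℝ) < 3 * (d + 1) := by positivity
    nlinarith
  refine ⟨K, hK0, ?_⟩
  intro B U U' L MU CR hL hMU hCR hrough hU hR t ht
  -- key quantitative bound, for each admissible ε
  have key : ∀ ε : ℝ, 0 < ε → ε ≤ T →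
      ‖U' t‖ ≤ d * ((2 * MU + CR * ε ^ (2 * α)) / (L * ε ^ θ)) := by
    intro ε hε hεT
    have hεθ : 0 < L * ε ^ θ := mul_pos hL (Real.rpow_pos_of_pos hε θ)
    have hbd0 : 0 ≤ (2 * MU + CR * ε ^ (2 * α)) / (L * ε ^ θ) := by positivity
    refine opnorm_row_bound _ _ hbd0 fun j i => ?_
    set N : ℝ := Real.sqrt (∑ i, (U' t (Pi.single i 1 : Fin d → ℝ) j) ^ 2) with hNdef
    have hrowle : |U' t (Pi.single i 1 : Fin d → ℝ) j| ≤ N := by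
      rw [hNdef, ← Real.sqrt_sq_eq_abs]
      exact Real.sqrt_le_sqrt (Finset.single_le_sum
        (f := fun i => (U' t (Pi.single i 1 : Fin d → ℝ) j) ^ 2)
        (fun i _ => sq_nonneg _) (Finset.mem_univ i))
    refine le_trans hrowle ?_
    have hN0 : (0:ℝ) ≤ N := by rw [hNdef]; exact Real.sqrt_nonneg _
    rcases eq_or_lt_of_le hN0 with h0 | h0
    · rw [← h0]; exact hbd0
    · set v : Fin d → ℝ := fun i => U' t (Pi.single i 1 : Fin d → ℝ) j / N with hvdef
      have hv : ∑ i, v i ^ 2 = 1 := by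
        simp only [hvdef, div_pow]
        rw [← Finset.sum_div, div_eq_one_iff_eq (by positivity)]
        rw [hNdef, Real.sq_sqrt (Finset.sum_nonneg fun i _ => sq_nonneg _)]
      obtain ⟨t', ht', htt', hBig⟩ := hrough v hv t ht ε hε hεT
      have hsum : ∑ i, v i * (B t' i - B t i) = (U' t (B t' - B t)) j / N := by
        rw [apply_eq_sum, Finset.sum_div]
        refine Finset.sum_congr rfl fun i _ => ?_
        simp only [hvdef, Pi.sub_apply]
        ring
      have hNBig : N * (L * ε ^ θ) ≤ |(U' t (B t' - B t)) j| := by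
        rw [hsum, abs_div, abs_of_pos h0] at hBig
        calc N * (L * ε ^ θ) ≤ N * (|(U' t (B t' - B t)) j| / N) :=
              mul_le_mul_of_nonneg_left hBig h0.le
          _ = |(U' t (B t' - B t)) j| := by field_simp
      have hup : |(U' t (B t' - B t)) j| ≤ 2 * MU + CR * ε ^ (2 * α) := by
        have h1 : (U' t (B t' - B t)) j
            = (U t' - U t) j - (U t' - U t - U' t (B t' - B t)) j := by
          simp only [Pi.sub_apply]; ring
        have h2 : |(U t' - U t) j| ≤ 2 * MU := by
          calc |(U t' - U t) j| ≤ ‖U t' - U t‖ := by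
                simpa using norm_le_pi_norm (U t' - U t) j
            _ ≤ ‖U t'‖ + ‖U t‖ := norm_sub_le _ _
            _ ≤ 2 * MU := by have := hU t' ht'; have := hU t ht; linarith
        have h3 : |(U t' - U t - U' t (B t' - B t)) j| ≤ CR * ε ^ (2 * α) := by
          calc |(U t' - U t - U' t (B t' - B t)) j|
              ≤ ‖U t' - U t - U' t (B t' - B t)‖ := by
                simpa using norm_le_pi_norm (U t' - U t - U' t (B t' - B t)) j
            _ ≤ CR * |t' - t| ^ (2 * α) := hR t ht t' ht'
            _ ≤ CR * ε ^ (2 * α) :=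
              mul_le_mul_of_nonneg_left
                (Real.rpow_le_rpow (abs_nonneg _) htt' h2α.le) hCR
        calc |(U' t (B t' - B t)) j| ≤ |(U t' - U t) j| + |(U t' - U t - U' t (B t' - B t)) j| := by
              rw [h1]; exact abs_sub _ _
          _ ≤ 2 * MU + CR * ε ^ (2 * α) := add_le_add h2 h3
      rw [le_div_iff₀ hεθ]
      exact hNBig.trans hup
  -- choose ε optimally
  rcases eq_or_lt_of_le hMU with hMUz | hMUp
  · -- MU = 0 : U' t vanishes
    have hzero : ‖U' t‖ ≤ 0 := by
      have h1 : Filter.Tendsto (fun ε : ℝ => ε ^ (2 * α - θ)) (nhdsWithin 0 (Ioi 0)) (nhds 0) := by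
        have hc := (Real.continuousAt_rpow_const 0 (2 * α - θ)
          (Or.inr (by linarith : (0:ℝ) ≤ 2 * α - θ))).tendsto
        rw [Real.zero_rpow (by linarith : 2 * α - θ ≠ 0)] at hc
        exact hc.mono_left nhdsWithin_le_nhds
      have h2 : Filter.Tendsto (fun ε : ℝ => (d : ℝ) * CR / L * ε ^ (2 * α - θ))
          (nhdsWithin 0 (Ioi 0)) (nhds 0) := by
        simpa using tendsto_const_nhds.mul h1
      have heq : ∀ᶠ ε in nhdsWithin (0:ℝ) (Ioi 0),
          (d : ℝ) * CR / L * ε ^ (2 * α - θ)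
            = (d : ℝ) * ((2 * MU + CR * ε ^ (2 * α)) / (L * ε ^ θ)) := by
        filter_upwards [self_mem_nhdsWithin] with ε (hε : ε ∈ Ioi (0:ℝ))
        have hε0 : (0:ℝ) < ε := hε
        have hεθ0 : (0:ℝ) < ε ^ θ := Real.rpow_pos_of_pos hε0 θ
        rw [Real.rpow_sub hε0, ← hMUz]
        field_simp
        ring
      have hlim := h2.congr' heq
      refine ge_of_tendsto hlim ?_
      filter_upwards [Ioc_mem_nhdsGT_of_mem (⟨le_refl (0:ℝ), hT0⟩ : (0:ℝ) ∈ Ico 0 T)]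
        with ε hε
      exact key ε hε.1 hε.2
    refine hzero.trans ?_
    positivity
  · rcases eq_or_lt_of_le hCR with hCRz | hCRp
    · -- CR = 0 : take ε = T
      have hk := key T hT0 le_rfl
      rw [← hCRz] at hk ⊢
      have hLne : L ≠ 0 := hL.ne'
      have hTθ : (0:ℝ) < T ^ θ := Real.rpow_pos_of_pos hT0 θ
      have hMU' : MU ^ (1 - β) * MU ^ β = MU := by
        rw [← Real.rpow_add hMUp]; simp
      calc ‖U' t‖ ≤ d * ((2 * MU + 0 * T ^ (2 * α)) / (L * T ^ θ)) := hk
        _ = 2 * d * (T ^ θ)⁻¹ * L⁻¹ * MU := by field_simp; ring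
        _ ≤ K * L⁻¹ * MU := by
            have h1 : 2 * (d:ℝ) * (T ^ θ)⁻¹ ≤ K := by
              rw [hKdef]
              refine mul_le_mul (by push_cast; linarith) hmaxT (by positivity) (by positivity)
            have := mul_le_mul_of_nonneg_right h1 (inv_nonneg.2 hL.le)
            exact mul_le_mul_of_nonneg_right this hMUp.le
        _ = K * L⁻¹ * MU ^ (1 - β) * ((0:ℝ) ^ β + MU ^ β) := by
            rw [Real.zero_rpow hβ0.ne', zero_add, mul_assoc (K * L⁻¹), hMU']
    · -- CR > 0
      set ε₁ : ℝ := (MU / CR) ^ (1 / (2 * α)) with hε₁def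
      have hMC : 0 < MU / CR := div_pos hMUp hCRp
      have hε₁0 : 0 < ε₁ := Real.rpow_pos_of_pos hMC _
      have hε₁pow : ε₁ ^ (2 * α) = MU / CR := by
        rw [hε₁def, ← Real.rpow_mul hMC.le, one_div_mul_cancel h2α.ne', Real.rpow_one]
      have hε₁θ : ε₁ ^ θ = MU ^ β / CR ^ β := by
        rw [hε₁def, ← Real.rpow_mul hMC.le,
          show 1 / (2 * α) * θ = β by rw [hβdef]; field_simp,
          Real.div_rpow hMUp.le hCRp.le]
      have hMUβ0 : (0:ℝ) < MU ^ β := Real.rpow_pos_of_pos hMUp β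
      have hCRβ0 : (0:ℝ) < CR ^ β := Real.rpow_pos_of_pos hCRp β
      have hMU1β : MU ^ (1 - β) = MU / MU ^ β := by
        rw [Real.rpow_sub hMUp, Real.rpow_one]
      have hLne : L ≠ 0 := hL.ne'
      rcases le_or_gt ε₁ T with hle | hlt
      · -- ε₁ ≤ T : optimal choice
        have hk := key ε₁ hε₁0 hle
        have hCRε : CR * ε₁ ^ (2 * α) = MU := by
          rw [hε₁pow]; field_simp
        rw [hCRε] at hk
        have hε₁θ0 : (0:ℝ) < ε₁ ^ θ := Real.rpow_pos_of_pos hε₁0 θ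
        calc ‖U' t‖ ≤ d * ((2 * MU + MU) / (L * ε₁ ^ θ)) := hk
          _ = 3 * d * L⁻¹ * MU ^ (1 - β) * CR ^ β := by
              rw [hε₁θ, hMU1β]; field_simp; ring
          _ ≤ K * L⁻¹ * MU ^ (1 - β) * (CR ^ β + MU ^ β) := by
              have h3K : (3:ℝ) * d ≤ K := by
                calc (3:ℝ) * d ≤ 3 * (d + 1) * 1 := by push_cast; linarith
                  _ ≤ K := by
                      rw [hKdef]
                      exact mul_le_mul_of_nonneg_left hmax1 (by positivity)
              gcongr
              exact le_add_of_nonneg_right hMUβ0.le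
      · -- T < ε₁ : take ε = T
        have hk := key T hT0 le_rfl
        have hTθ : (0:ℝ) < T ^ θ := Real.rpow_pos_of_pos hT0 θ
        have hbound : CR * T ^ (2 * α) ≤ MU := by
          have h' : T ^ (2 * α) ≤ ε₁ ^ (2 * α) :=
            Real.rpow_le_rpow hT0.le hlt.le h2α.le
          rw [hε₁pow] at h'
          calc CR * T ^ (2 * α) ≤ CR * (MU / CR) :=
                mul_le_mul_of_nonneg_left h' hCRp.le
            _ = MU := by field_simp
        have hMU' : MU ^ (1 - β) * MU ^ β = MU := by
          rw [← Real.rpow_add hMUp]; simp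
        calc ‖U' t‖ ≤ d * ((2 * MU + MU) / (L * T ^ θ)) := by
              refine hk.trans ?_
              gcongr
          _ = 3 * d * (T ^ θ)⁻¹ * L⁻¹ * MU := by field_simp; ring
          _ ≤ K * L⁻¹ * MU := by
              have h1 : 3 * (d:ℝ) * (T ^ θ)⁻¹ ≤ K := by
                rw [hKdef]
                refine mul_le_mul (by push_cast; linarith) hmaxT (by positivity) (by positivity)
              have h2 := mul_le_mul_of_nonneg_right h1 (inv_nonneg.2 hL.le)
              exact mul_le_mul_of_nonneg_right h2 hMUp.le
          _ = K * L⁻¹ * (MU ^ (1 - β) * MU ^ β) := by rw [hMU']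
          _ ≤ K * L⁻¹ * MU ^ (1 - β) * (CR ^ β + MU ^ β) := by
              rw [mul_assoc (K * L⁻¹)]
              gcongr
              exact le_add_of_nonneg_left hCRβ0.le
end

section
/- Let V₁, V₂: [0,T] × 𝓔_p → ℝⁿ be Fréchet differentiable in the second variable and let V̂₁, V̂₂ be their 𝓔_p-lifts, V̂ᵢ(t,x) = (1_{[t,T]}(·)Vᵢ(t,x), Vᵢ(t,x)). Then for each (t,x) the projection onto ℝⁿ of the classical Lie bracket of the lifts equals the vertical-derivative Lie bracket of V₁, V₂: Π_n [V̂₁, V̂₂](t,x) = (∂_v V₂ V₁ − ∂_v V₁ V₂)(t,x), where ∂_v V is the n×n matrix whose i-th column is the derivative at δ=0 of δ ↦ V(t, x + δ(1_{[t,T]}e_i, e_i)). -/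
open MeasureTheory
open scoped ENNReal


section Aux
variable {α E : Type*} [MeasurableSpace α] {μ : Measure α} [NormedAddCommGroup E]
  [NormedSpace ℝ E] {p : ℝ≥0∞} {s : Set α} (hs : MeasurableSet s) (hμs : μ s ≠ ⊤)

theorem indicatorConstLp_smul' (r : ℝ) (c : E) :
    indicatorConstLp p hs hμs (r • c) = r • indicatorConstLp p hs hμs c := by
  apply Lp.ext
  filter_upwards [indicatorConstLp_coeFn (c := r • c) (hs := hs) (hμs := hμs) (p := p),
    Lp.coeFn_smul r (indicatorConstLp p hs hμs c),
    indicatorConstLp_coeFn (c := c) (hs := hs) (hμs := hμs) (p := p)] with a h1 h2 h3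
  rw [h1, h2, Pi.smul_apply, h3, Set.indicator_const_smul]

/-- `indicatorConstLp` as a continuous linear map in the constant. -/
noncomputable def indCLM [Fact (1 ≤ p)] : E →L[ℝ] Lp E p μ :=
  LinearMap.mkContinuous
    { toFun := fun c => indicatorConstLp p hs hμs c
      map_add' := fun _ _ => indicatorConstLp_add.symm
      map_smul' := fun r c => indicatorConstLp_smul' hs hμs r c }
    ((μ s).toReal ^ (1 / p.toReal))
    (fun c => by rw [mul_comm]; exact norm_indicatorConstLp_le (hs := hs) (hμs := hμs))

end Aux

/-- Let `𝓔_p = L_p([0,T] → ℝⁿ, μ) ⊕ ℝⁿ`, let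
`V₁, V₂ : [0,T] × 𝓔_p → ℝⁿ` be Fréchet differentiable in the second variable, and let
`V̂ᵢ(t,x) = (1_{[t,T]}(·) Vᵢ(t,x), Vᵢ(t,x))` be their `𝓔_p`-lifts (the first component being
the `L_p` element `indicatorConstLp`).  Then the projection onto `ℝⁿ` of the classical Lie
bracket of the lifts equals the vertical-derivative Lie bracket of `V₁, V₂`:
`Π_n [V̂₁,V̂₂](t,x) = (∂_v V₂ V₁ − ∂_v V₁ V₂)(t,x)`, where `∂_v V` has `i`-th column the
derivative at `δ = 0` of `δ ↦ V(t, x + δ(1_{[t,T]} e_i, e_i))`. -/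
theorem stmt19 (n : ℕ) (T : ℝ) (p : ℝ≥0∞) [Fact (1 ≤ p)]
    (μ : Measure ℝ) (t : ℝ) (hμ : μ (Set.Icc t T) ≠ ⊤)
    (V₁ V₂ : ℝ →
      (Lp (EuclideanSpace ℝ (Fin n)) p μ × EuclideanSpace ℝ (Fin n)) →
        EuclideanSpace ℝ (Fin n))
    (x : Lp (EuclideanSpace ℝ (Fin n)) p μ × EuclideanSpace ℝ (Fin n))
    (hV₁ : DifferentiableAt ℝ (V₁ t) x) (hV₂ : DifferentiableAt ℝ (V₂ t) x) :
    -- the `𝓔_p`-lift of a vector `v ∈ ℝⁿ`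
    ∀ ℓ : EuclideanSpace ℝ (Fin n) →
        Lp (EuclideanSpace ℝ (Fin n)) p μ × EuclideanSpace ℝ (Fin n),
      (∀ v, ℓ v = (indicatorConstLp p measurableSet_Icc hμ v, v)) →
      ((fderiv ℝ (fun y => ℓ (V₂ t y)) x) (ℓ (V₁ t x)) -
        (fderiv ℝ (fun y => ℓ (V₁ t y)) x) (ℓ (V₂ t x))).2 =
      (∑ i : Fin n, V₁ t x i •
          deriv (fun δ : ℝ => V₂ t (x + δ • ℓ (EuclideanSpace.single i 1))) 0) -
      (∑ i : Fin n, V₂ t x i •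
          deriv (fun δ : ℝ => V₁ t (x + δ • ℓ (EuclideanSpace.single i 1))) 0) := by
  intro ℓ hℓ
  set E := EuclideanSpace ℝ (Fin n)
  let L : E →L[ℝ] Lp E p μ × E :=
    (indCLM measurableSet_Icc hμ).prod (ContinuousLinearMap.id ℝ E)
  have hℓL : ℓ = ⇑L := by
    funext v; rw [hℓ]; rfl
  subst hℓL
  have hf : ∀ (V : (Lp E p μ × E) → E), DifferentiableAt ℝ V x →
      fderiv ℝ (fun y => L (V y)) x = L.comp (fderiv ℝ V x) := fun V hV =>
    (L.hasFDerivAt.comp x hV.hasFDerivAt).fderiv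
  have hd : ∀ (V : (Lp E p μ × E) → E), DifferentiableAt ℝ V x → ∀ c,
      deriv (fun δ : ℝ => V (x + δ • c)) 0 = fderiv ℝ V x c := by
    intro V hV c
    have h1 : HasDerivAt (fun δ : ℝ => x + δ • c) c 0 := by
      simpa using ((hasDerivAt_id (0 : ℝ)).smul_const c).const_add x
    have h2 : HasFDerivAt V (fderiv ℝ V x) ((fun δ : ℝ => x + δ • c) 0) := by
      simpa using hV.hasFDerivAt
    exact (h2.comp_hasDerivAt 0 h1).deriv
  have hsum : ∀ (D : (Lp E p μ × E) →L[ℝ] E) (w : E),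
      D (L w) = ∑ i, w i • D (L (EuclideanSpace.single i 1)) := by
    intro D w
    have hw : ∑ i, w i • EuclideanSpace.single i (1 : ℝ) = w := by
      simpa using (EuclideanSpace.basisFun (Fin n) ℝ).sum_repr w
    conv_lhs => rw [← hw]
    simp [map_sum]
  rw [hf _ hV₂, hf _ hV₁]
  simp only [ContinuousLinearMap.coe_comp', Function.comp_apply]
  have hsnd : ∀ z : E, (L z).2 = z := fun z => rfl
  rw [Prod.snd_sub, hsnd, hsnd,
    hsum (fderiv ℝ (V₂ t) x) (V₁ t x), hsum (fderiv ℝ (V₁ t) x) (V₂ t x)]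
  congr 1 <;> exact Finset.sum_congr rfl fun i _ => by rw [hd _ (by assumption) _]
end
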